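/- arXiv:1512.03545 — 5 statements merged into one kernel-verified Lean document; each statement's English description precedes it below -/
import Mathlib

section
/- Let C₁ > 0 be such that 0 ≤ K(t,u) ≤ C₁ u^{1/2−H} for all 0 < u < t ≤ 1, let α > 0, and let h ∈ L²([0,1]; ℝⁿ). Then for every s ∈ (0,1], the quantity I₂(s) = (α (H−1/2) s^{H−1/2} / Γ(3/2 − H)) ∫_0^s (s^{1/2−H} − u^{1/2−H}) (s−u)^{−(1/2+H)} (Kh)_u du satisfies |I₂(s)| ≤ (α (H−1/2) C₁ C₂ s^{3/2−2H} / (Γ(3/2 − H) √(2−2H))) ‖h‖. -/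
open MeasureTheory Real Set

noncomputable def betaFn (a b : ℝ) : ℝ := Real.Gamma a * Real.Gamma b / Real.Gamma (a + b)

noncomputable def cH (H : ℝ) : ℝ := Real.sqrt (H * (2*H - 1) / betaFn (2 - 2*H) (H - 1/2))

/-- The kernel `K(t,s)` of the fractional integral operator, for Hurst parameter `H`. -/
noncomputable def Ker (H t s : ℝ) : ℝ :=
  if s < t then cH H * s ^ ((1:ℝ)/2 - H) * ∫ u in s..t, u ^ (H - 1/2) * (u - s) ^ (H - 3/2)
  else 0

/-- The operator `(Kh)_t = ∫_0^t K(t,s) h_s ds`. -/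
noncomputable def Kop {n : ℕ} (H : ℝ) (h : ℝ → EuclideanSpace ℝ (Fin n)) (t : ℝ) :
    EuclideanSpace ℝ (Fin n) :=
  ∫ s in (0:ℝ)..t, Ker H t s • h s

/-- The constant `C₂ = ∫_0^1 (v^{1/2-H} - 1)(1-v)^{-(1/2+H)} dv`. -/
noncomputable def C2 (H : ℝ) : ℝ :=
  ∫ v in (0:ℝ)..1, (v ^ ((1:ℝ)/2 - H) - 1) * (1 - v) ^ (-(1/2 + H))

/-! For `u ≤ s ≤ 1`, the kernel bound and Cauchy–Schwarz give
`‖(Kh)_u‖ ≤ C₁ u^{1-H} / √(2-2H) ‖h‖ ≤ C₁ s^{1-H} / √(2-2H) ‖h‖`, with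
`u^{1-H} / √(2-2H)` the `L²(0,u)` norm of `v ↦ v^{1/2-H}`. The weight
`(u^{1/2-H} - s^{1/2-H}) (s-u)^{-(1/2+H)}` of `I₂(s)` is nonnegative and integrable on `(0,s)`,
and the substitution `u = s v` shows that its integral is `C₂ s^{1-2H}`; pulling the uniform
bound on `Kh` out of the integral gives the estimate. -/

open Filter

theorem integral_mul_le_sqrt_mul_sqrt {α : Type*} [MeasurableSpace α] {μ : Measure α}
    {f g : α → ℝ} (hf₀ : 0 ≤ᵐ[μ] f) (hg₀ : 0 ≤ᵐ[μ] g) (hf : MemLp f 2 μ) (hg : MemLp g 2 μ) :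
    ∫ x, f x * g x ∂μ ≤ √(∫ x, f x ^ 2 ∂μ) * √(∫ x, g x ^ 2 ∂μ) := by
  have := integral_mul_le_Lp_mul_Lq_of_nonneg Real.HolderConjugate.two_two hf₀ hg₀
    (by rwa [ENNReal.ofReal_ofNat]) (by rwa [ENNReal.ofReal_ofNat])
  simpa only [Real.rpow_two, Real.sqrt_eq_rpow] using this

section PowerWeight

variable {a u : ℝ}

theorem memLp_two_rpow (ha : -1/2 < a) (hu : 0 ≤ u) :
    MemLp (fun v : ℝ => v ^ a) 2 (volume.restrict (Ioc 0 u)) := by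
  have hmeas : Measurable fun v : ℝ => v ^ a := by fun_prop
  refine (memLp_two_iff_integrable_sq hmeas.aestronglyMeasurable).2 ?_
  refine ((intervalIntegrable_iff_integrableOn_Ioc_of_le hu).1
    (intervalIntegral.intervalIntegrable_rpow' (r := 2 * a) (by linarith))).congr_fun
    (fun v hv => ?_) measurableSet_Ioc
  rw [← Real.rpow_natCast, ← Real.rpow_mul hv.1.le]
  norm_num [mul_comm]

theorem sqrt_integral_rpow_sq (ha : -1/2 < a) (hu : 0 ≤ u) :
    √(∫ v in Ioc 0 u, (v ^ a) ^ 2) = u ^ (a + 1/2) / √(2 * a + 1) := by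
  have hsq : ∫ v in Ioc 0 u, (v ^ a) ^ 2 = (u ^ (a + 1/2)) ^ 2 / (2 * a + 1) := by
    rw [← intervalIntegral.integral_of_le hu]
    calc ∫ v in (0:ℝ)..u, (v ^ a) ^ 2 = ∫ v in (0:ℝ)..u, v ^ (2 * a) :=
          intervalIntegral.integral_congr fun v hv => by
            rw [uIcc_of_le hu] at hv
            rw [← Real.rpow_natCast, ← Real.rpow_mul hv.1, mul_comm]
            norm_num
      _ = (u ^ (a + 1/2)) ^ 2 / (2 * a + 1) := by
          rw [integral_rpow (Or.inl (by linarith)), Real.zero_rpow (by linarith), sub_zero,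
            ← Real.rpow_natCast, ← Real.rpow_mul hu]
          push_cast
          ring_nf
  rw [hsq, Real.sqrt_div' _ (by linarith), Real.sqrt_sq (by positivity)]

end PowerWeight

theorem norm_integral_smul_le_of_abs_le_rpow {E : Type*} [NormedAddCommGroup E]
    [NormedSpace ℝ E] {k : ℝ → ℝ} {h : ℝ → E} {C a u : ℝ} (ha : -1/2 < a) (hC : 0 ≤ C)
    (hu : 0 ≤ u) (hk : ∀ v ∈ Ioc 0 u, |k v| ≤ C * v ^ a)
    (hh : MemLp h 2 (volume.restrict (Ioc 0 u))) :
    ‖∫ v in (0:ℝ)..u, k v • h v‖ ≤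
      C * (u ^ (a + 1/2) / √(2 * a + 1)) * √(∫ v in (0:ℝ)..u, ‖h v‖ ^ 2) := by
  have hprod : IntegrableOn (fun v => v ^ a * ‖h v‖) (Ioc 0 u) :=
    (memLp_two_rpow ha hu).integrable_mul hh.norm
  calc ‖∫ v in (0:ℝ)..u, k v • h v‖ ≤ ∫ v in (0:ℝ)..u, C * (v ^ a * ‖h v‖) := by
        refine intervalIntegral.norm_integral_le_of_norm_le hu
          (Eventually.of_forall fun v hv => ?_)
          ((intervalIntegrable_iff_integrableOn_Ioc_of_le hu).2 (hprod.const_mul C))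
        rw [norm_smul, Real.norm_eq_abs, ← mul_assoc]
        exact mul_le_mul_of_nonneg_right (hk v hv) (norm_nonneg _)
    _ = C * ∫ v in Ioc 0 u, v ^ a * ‖h v‖ := by
        rw [intervalIntegral.integral_const_mul, intervalIntegral.integral_of_le hu]
    _ ≤ C * (√(∫ v in Ioc 0 u, (v ^ a) ^ 2) * √(∫ v in Ioc 0 u, ‖h v‖ ^ 2)) := by
        gcongr
        exact integral_mul_le_sqrt_mul_sqrt
          (ae_restrict_of_forall_mem measurableSet_Ioc fun v hv => Real.rpow_nonneg hv.1.le _)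
          (Eventually.of_forall fun _ => norm_nonneg _) (memLp_two_rpow ha hu) hh.norm
    _ = C * (u ^ (a + 1/2) / √(2 * a + 1)) * √(∫ v in (0:ℝ)..u, ‖h v‖ ^ 2) := by
        rw [sqrt_integral_rpow_sq ha hu, intervalIntegral.integral_of_le hu, mul_assoc]

section Kernel

variable {H C₁ : ℝ}

theorem abs_Ker_le
    (hK : ∀ u t : ℝ, 0 < u → u < t → t ≤ 1 →
      0 ≤ Ker H t u ∧ Ker H t u ≤ C₁ * u ^ ((1:ℝ)/2 - H))
    (hC₁ : 0 ≤ C₁) {t v : ℝ} (ht : t ≤ 1) (hv : v ∈ Ioc 0 t) :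
    |Ker H t v| ≤ C₁ * v ^ ((1:ℝ)/2 - H) := by
  rcases hv.2.lt_or_eq with hvt | rfl
  · obtain ⟨hK₀, hK₁⟩ := hK v t hv.1 hvt ht
    rwa [abs_of_nonneg hK₀]
  · simp only [Ker, lt_irrefl, if_false, abs_zero]
    exact mul_nonneg hC₁ (Real.rpow_nonneg hv.1.le _)

theorem norm_Kop_le {n : ℕ} (hH : H < 1) (hC₁ : 0 ≤ C₁)
    (hK : ∀ u t : ℝ, 0 < u → u < t → t ≤ 1 →
      0 ≤ Ker H t u ∧ Ker H t u ≤ C₁ * u ^ ((1:ℝ)/2 - H))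
    {h : ℝ → EuclideanSpace ℝ (Fin n)} (hh : MemLp h 2 (volume.restrict (Ioc 0 1)))
    {u : ℝ} (hu : u ∈ Ioc 0 1) :
    ‖Kop H h u‖ ≤ C₁ * (u ^ (1 - H) / √(2 - 2 * H)) * √(∫ v in (0:ℝ)..1, ‖h v‖ ^ 2) := by
  have hKh := norm_integral_smul_le_of_abs_le_rpow (a := 1/2 - H) (by linarith) hC₁ hu.1.le
    (fun v hv => abs_Ker_le hK hC₁ hu.2 hv)
    (hh.mono_measure (Measure.restrict_mono (Ioc_subset_Ioc_right hu.2) le_rfl))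
  have hmono : ∫ v in (0:ℝ)..u, ‖h v‖ ^ 2 ≤ ∫ v in (0:ℝ)..1, ‖h v‖ ^ 2 :=
    intervalIntegral.integral_mono_interval le_rfl hu.1.le hu.2
      (Eventually.of_forall fun _ => sq_nonneg _)
      ((intervalIntegrable_iff_integrableOn_Ioc_of_le zero_le_one).2
        (hh.integrable_norm_pow two_ne_zero))
  calc ‖Kop H h u‖ ≤ _ := hKh
    _ = C₁ * (u ^ (1 - H) / √(2 - 2 * H)) * √(∫ v in (0:ℝ)..u, ‖h v‖ ^ 2) := by ring_nf
    _ ≤ _ := by obtain ⟨hu₀, -⟩ := hu; gcongr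

end Kernel

theorem rpow_mul_rpow_le_of_add_eq_one {x y a : ℝ} (hx : 0 ≤ x) (hy : 0 ≤ y) (hxy : x + y = 1)
    (ha : a ≤ 0) : x ^ a * y ^ a ≤ (1/2 : ℝ) ^ a * (x ^ a + y ^ a) := by
  have hxa := Real.rpow_nonneg hx a
  have hya := Real.rpow_nonneg hy a
  rcases le_total x (1/2) with hx₂ | hx₂
  · have : y ^ a ≤ (1/2 : ℝ) ^ a := Real.rpow_le_rpow_of_nonpos (by norm_num) (by linarith) ha
    nlinarith [Real.rpow_nonneg (by norm_num : (0:ℝ) ≤ 1/2) a]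
  · have : x ^ a ≤ (1/2 : ℝ) ^ a := Real.rpow_le_rpow_of_nonpos (by norm_num) hx₂ ha
    nlinarith [Real.rpow_nonneg (by norm_num : (0:ℝ) ≤ 1/2) a]

noncomputable def i2Weight (H s u : ℝ) : ℝ :=
  (u ^ ((1:ℝ)/2 - H) - s ^ ((1:ℝ)/2 - H)) * (s - u) ^ (-(1/2 + H))

section Weight

variable {H s u v : ℝ}

theorem C2_eq_integral_i2Weight : C2 H = ∫ v in (0:ℝ)..1, i2Weight H 1 v := by
  simp only [C2, i2Weight, Real.one_rpow]

theorem i2Weight_nonneg (hH : 1/2 ≤ H) (hu : 0 < u) (hus : u ≤ s) : 0 ≤ i2Weight H s u :=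
  mul_nonneg (sub_nonneg.2 (Real.rpow_le_rpow_of_nonpos hu hus (by linarith)))
    (Real.rpow_nonneg (sub_nonneg.2 hus) _)

theorem i2Weight_mul (hs : 0 < s) (hv₀ : 0 ≤ v) (hv₁ : v ≤ 1) :
    i2Weight H s (s * v) = s ^ (-(2 * H)) * i2Weight H 1 v := by
  have hpow : s ^ ((1:ℝ)/2 - H) * s ^ (-(1/2 + H)) = s ^ (-(2 * H)) := by
    rw [← Real.rpow_add hs]
    ring_nf
  rw [i2Weight, i2Weight, Real.one_rpow, Real.mul_rpow hs.le hv₀, ← hpow,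
    show s - s * v = s * (1 - v) by ring, Real.mul_rpow hs.le (by linarith)]
  ring

theorem i2Weight_one_le (hH : H ≤ 3/2) (hv₀ : 0 < v) (hv₁ : v ≤ 1) :
    i2Weight H 1 v ≤ v ^ ((1:ℝ)/2 - H) * (1 - v) ^ ((1:ℝ)/2 - H) := by
  rcases hv₁.lt_or_eq with hv₁ | rfl
  · have hv : v ^ ((1:ℝ)/2 - H) * v ≤ 1 := by
      rw [← Real.rpow_add_one hv₀.ne']
      exact Real.rpow_le_one hv₀.le hv₁.le (by linarith)
    have h1v : (1 - v) ^ ((1:ℝ)/2 - H) = (1 - v) ^ (-(1/2 + H)) * (1 - v) := by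
      rw [← Real.rpow_add_one (by linarith)]
      ring_nf
    rw [i2Weight, Real.one_rpow, h1v]
    nlinarith [Real.rpow_nonneg (sub_nonneg.2 hv₁.le) (-(1/2 + H))]
  · simp only [i2Weight, Real.one_rpow, sub_self, zero_mul]
    positivity

theorem integrableOn_i2Weight_one (hH₀ : 1/2 ≤ H) (hH₁ : H < 3/2) :
    IntegrableOn (i2Weight H 1) (Ioc 0 1) := by
  have hpow : IntegrableOn (fun v : ℝ => v ^ ((1:ℝ)/2 - H)) (Ioc 0 1) :=
    (intervalIntegrable_iff_integrableOn_Ioc_of_le zero_le_one).1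
      (intervalIntegral.intervalIntegrable_rpow' (by linarith))
  have hpow' : IntegrableOn (fun v : ℝ => (1 - v) ^ ((1:ℝ)/2 - H)) (Ioc 0 1) := by
    have := (intervalIntegral.intervalIntegrable_rpow' (a := 0) (b := 1)
      (r := (1:ℝ)/2 - H) (by linarith)).comp_sub_left 1
    rw [sub_zero, sub_self] at this
    exact (intervalIntegrable_iff_integrableOn_Ioc_of_le zero_le_one).1 this.symm
  refine ((hpow.add hpow').const_mul ((1/2 : ℝ) ^ ((1:ℝ)/2 - H))).mono'
    (by unfold i2Weight; fun_prop) ?_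
  filter_upwards [ae_restrict_mem measurableSet_Ioc] with v hv
  rw [Real.norm_of_nonneg (i2Weight_nonneg hH₀ hv.1 hv.2)]
  exact (i2Weight_one_le hH₁.le hv.1 hv.2).trans
    (rpow_mul_rpow_le_of_add_eq_one hv.1.le (sub_nonneg.2 hv.2) (by ring) (by linarith))

theorem integrableOn_i2Weight (hH₀ : 1/2 ≤ H) (hH₁ : H < 3/2) (hs : 0 < s) :
    IntegrableOn (i2Weight H s) (Ioc 0 s) := by
  have h := ((intervalIntegrable_iff_integrableOn_Ioc_of_le zero_le_one).2
    (integrableOn_i2Weight_one hH₀ hH₁)).comp_mul_left (c := s⁻¹)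
  rw [zero_div, one_div, inv_inv] at h
  refine ((intervalIntegrable_iff_integrableOn_Ioc_of_le hs.le).1
    (h.const_mul (s ^ (-(2 * H))))).congr_fun (fun u hu => ?_) measurableSet_Ioc
  dsimp only
  rw [← i2Weight_mul hs (mul_nonneg (inv_nonneg.2 hs.le) hu.1.le)
    (inv_mul_le_one_of_le₀ hu.2 hs.le), mul_inv_cancel_left₀ hs.ne']

theorem integral_i2Weight (hs : 0 < s) :
    ∫ u in (0:ℝ)..s, i2Weight H s u = C2 H * s ^ (1 - 2 * H) := by
  have hsub := intervalIntegral.smul_integral_comp_mul_left (i2Weight H s) s (a := 0) (b := 1)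
  rw [mul_zero, mul_one] at hsub
  have hscale : ∫ v in (0:ℝ)..1, i2Weight H s (s * v) =
      ∫ v in (0:ℝ)..1, s ^ (-(2 * H)) * i2Weight H 1 v :=
    intervalIntegral.integral_congr fun v hv => by
      rw [uIcc_of_le zero_le_one] at hv
      exact i2Weight_mul hs hv.1 hv.2
  have hpow : s * s ^ (-(2 * H)) = s ^ (1 - 2 * H) := by
    rw [mul_comm, ← Real.rpow_add_one hs.ne']
    ring_nf
  rw [← hsub, hscale, intervalIntegral.integral_const_mul, smul_eq_mul, ← mul_assoc, hpow,
    C2_eq_integral_i2Weight, mul_comm]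

end Weight

theorem norm_integral_smul_le_of_norm_le {E : Type*} [NormedAddCommGroup E] [NormedSpace ℝ E]
    {g : ℝ → ℝ} {f : ℝ → E} {a b M : ℝ} (hab : a ≤ b) (hg : IntegrableOn g (Ioc a b))
    (hg₀ : ∀ u ∈ Ioc a b, 0 ≤ g u) (hf : ∀ u ∈ Ioc a b, ‖f u‖ ≤ M) :
    ‖∫ u in a..b, g u • f u‖ ≤ M * ∫ u in a..b, g u := by
  rw [← intervalIntegral.integral_const_mul]
  refine intervalIntegral.norm_integral_le_of_norm_le hab (Eventually.of_forall fun u hu => ?_)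
    ((intervalIntegrable_iff_integrableOn_Ioc_of_le hab).2 (hg.const_mul M))
  rw [norm_smul, Real.norm_of_nonneg (hg₀ u hu), mul_comm M]
  exact mul_le_mul_of_nonneg_left (hf u hu) (hg₀ u hu)

theorem stmt_5_general (H : ℝ) (hH : H ∈ Set.Ioo (1/2 : ℝ) 1) (n : ℕ)
    (C₁ : ℝ) (hC₁ : 0 < C₁)
    (hK : ∀ u t : ℝ, 0 < u → u < t → t ≤ 1 →
      0 ≤ Ker H t u ∧ Ker H t u ≤ C₁ * u ^ ((1:ℝ)/2 - H))
    (α : ℝ) (hα : 0 < α)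
    (h : ℝ → EuclideanSpace ℝ (Fin n))
    (hh : MemLp h 2 (volume.restrict (Set.Ioc (0:ℝ) 1))) :
    ∀ s ∈ Set.Ioc (0:ℝ) 1,
      ‖(α * (H - 1/2) * s ^ (H - 1/2) / Real.Gamma (3/2 - H)) •
          ∫ u in (0:ℝ)..s,
            ((s ^ ((1:ℝ)/2 - H) - u ^ ((1:ℝ)/2 - H)) * (s - u) ^ (-(1/2 + H))) •
              Kop H h u‖ ≤
        α * (H - 1/2) * C₁ * C2 H * s ^ (3/2 - 2*H) /
            (Real.Gamma (3/2 - H) * Real.sqrt (2 - 2*H)) *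
          Real.sqrt (∫ u in (0:ℝ)..1, ‖h u‖^2) := by
  obtain ⟨hH₀, hH₁⟩ := hH
  rintro s ⟨hs₀, hs₁⟩
  set N := √(∫ u in (0:ℝ)..1, ‖h u‖ ^ 2)
  have hKh : ∀ u ∈ Ioc 0 s, ‖Kop H h u‖ ≤ C₁ * (s ^ (1 - H) / √(2 - 2 * H)) * N :=
    fun u ⟨hu₀, hus⟩ => (norm_Kop_le hH₁ hC₁.le hK hh ⟨hu₀, hus.trans hs₁⟩).trans (by gcongr)
  have hI := norm_integral_smul_le_of_norm_le hs₀.le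
    (integrableOn_i2Weight hH₀.le (by linarith) hs₀)
    (fun u hu => i2Weight_nonneg hH₀.le hu.1 hu.2) hKh
  rw [integral_i2Weight hs₀] at hI
  have hc : 0 ≤ α * (H - 1/2) * s ^ (H - 1/2) / Real.Gamma (3/2 - H) := by
    have hΓ := Real.Gamma_pos_of_pos (by linarith : (0:ℝ) < 3/2 - H)
    have hH : 0 ≤ H - 1/2 := by linarith
    positivity
  have hpow : s ^ (H - 1/2) * s ^ (1 - H) * s ^ (1 - 2 * H) = s ^ (3/2 - 2 * H) := by
    rw [← Real.rpow_add hs₀, ← Real.rpow_add hs₀]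
    ring_nf
  calc _ = α * (H - 1/2) * s ^ (H - 1/2) / Real.Gamma (3/2 - H) *
        ‖∫ u in (0:ℝ)..s, i2Weight H s u • Kop H h u‖ := by
        have hneg : ∀ u, ((s ^ ((1:ℝ)/2 - H) - u ^ ((1:ℝ)/2 - H)) * (s - u) ^ (-(1/2 + H))) •
            Kop H h u = -(i2Weight H s u • Kop H h u) := fun u => by
          rw [i2Weight, ← neg_smul, ← neg_mul, neg_sub]
        simp only [hneg, intervalIntegral.integral_neg, norm_neg, norm_smul,
          Real.norm_of_nonneg hc]
    _ ≤ α * (H - 1/2) * s ^ (H - 1/2) / Real.Gamma (3/2 - H) *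
        (C₁ * (s ^ (1 - H) / √(2 - 2 * H)) * N * (C2 H * s ^ (1 - 2 * H))) := by gcongr
    _ = _ := by rw [← hpow]; field_simp

/-- Estimate (13): `|I₂(s)| ≤ (α(H-1/2)C₁C₂ s^{3/2-2H}/(Γ(3/2-H)√(2-2H))) ‖h‖`. -/
theorem stmt_5 (H : ℝ) (hH : H ∈ Set.Ioo (1/2 : ℝ) 1) (n : ℕ) (hn : 1 ≤ n)
    (C₁ : ℝ) (hC₁ : 0 < C₁)
    (hK : ∀ u t : ℝ, 0 < u → u < t → t ≤ 1 →
      0 ≤ Ker H t u ∧ Ker H t u ≤ C₁ * u ^ ((1:ℝ)/2 - H))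
    (α : ℝ) (hα : 0 < α)
    (h : ℝ → EuclideanSpace ℝ (Fin n))
    (hh : MemLp h 2 (volume.restrict (Set.Ioc (0:ℝ) 1))) :
    ∀ s ∈ Set.Ioc (0:ℝ) 1,
      ‖(α * (H - 1/2) * s ^ (H - 1/2) / Real.Gamma (3/2 - H)) •
          ∫ u in (0:ℝ)..s,
            ((s ^ ((1:ℝ)/2 - H) - u ^ ((1:ℝ)/2 - H)) * (s - u) ^ (-(1/2 + H))) •
              Kop H h u‖ ≤
        α * (H - 1/2) * C₁ * C2 H * s ^ (3/2 - 2*H) /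
            (Real.Gamma (3/2 - H) * Real.sqrt (2 - 2*H)) *
          Real.sqrt (∫ u in (0:ℝ)..1, ‖h u‖^2) :=
  stmt_5_general H hH n C₁ hC₁ hK α hα h hh
end

section
/- Let α ≥ 0 and let P ∈ L¹([0,1]; ℝⁿ). Then ∫_0^1 |∫_s^1 e^{−αu} P_u du|² ds ≤ 2(1 + α²) ∫_0^1 |∫_s^1 P_v dv|² ds. -/
/-! With `Q s = ∫_s^1 P`, Fubini on the triangle `s < u < v ≤ 1` gives the integration by parts
`∫_s^1 e^{-αu} P_u du = e^{-αs} Q s - α ∫_s^1 e^{-αu} Q u du`, which needs no regularity of `P`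
beyond integrability. As `e^{-αu} ≤ 1`, this bounds `|∫_s^1 e^{-αu} P_u du|` by
`|Q s| + α ∫_0^1 |Q|`; square with `(x + y)² ≤ 2x² + 2y²`, integrate, and use Jensen's
`(∫_0^1 |Q|)² ≤ ∫_0^1 |Q|²`. -/

open MeasureTheory Real Set

section

variable {E : Type*} [NormedAddCommGroup E] [NormedSpace ℝ E]

theorem continuousOn_integral_Icc_left {P : ℝ → E} {a b : ℝ} (hab : a ≤ b)
    (hP : IntervalIntegrable P volume a b) :
    ContinuousOn (fun s => ∫ v in s..b, P v) (Icc a b) := by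
  rw [← uIcc_of_le hab]
  exact intervalIntegral.continuousOn_primitive_interval_left
    (by rw [uIcc_of_le hab]; exact (intervalIntegrable_iff_integrableOn_Icc_of_le hab).1 hP)

variable [CompleteSpace E]

theorem integral_smul_integral_eq_integral_integral_smul {g : ℝ → ℝ} {P : ℝ → E} {s b : ℝ}
    (hsb : s ≤ b) (hg : IntervalIntegrable g volume s b) (hP : IntervalIntegrable P volume s b) :
    ∫ u in s..b, g u • ∫ v in u..b, P v = ∫ v in s..b, (∫ u in s..v, g u) • P v := by
  rw [intervalIntegrable_iff_integrableOn_Ioc_of_le hsb] at hg hP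
  set μ := volume.restrict (Ioc s b)
  set f : ℝ × ℝ → E := {p | p.1 < p.2}.indicator fun p => g p.1 • P p.2
  have hf : Integrable f (μ.prod μ) :=
    (hg.smul_prod hP).indicator (measurableSet_lt measurable_fst measurable_snd)
  have inner_left : ∀ u ∈ Ioc s b, ∫ v, f (u, v) ∂μ = g u • ∫ v in u..b, P v := by
    intro u hu
    have : (fun v => f (u, v)) = (Ioi u).indicator fun v => g u • P v := by
      ext v; by_cases h : u < v <;> simp [f, h]
    rw [this, integral_indicator measurableSet_Ioi, Measure.restrict_restrict measurableSet_Ioi,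
      inter_comm, Ioc_inter_Ioi, max_eq_right hu.1.le, integral_smul,
      intervalIntegral.integral_of_le hu.2]
  have inner_right : ∀ v ∈ Ioc s b, ∫ u, f (u, v) ∂μ = (∫ u in s..v, g u) • P v := by
    intro v hv
    have : (fun u => f (u, v)) = (Iio v).indicator fun u => g u • P v := by
      ext u; by_cases h : u < v <;> simp [f, h]
    rw [this, integral_indicator measurableSet_Iio, Measure.restrict_restrict measurableSet_Iio,
      show Iio v ∩ Ioc s b = Ioo s v by grind, integral_smul_const,
      ← integral_Ioc_eq_integral_Ioo, intervalIntegral.integral_of_le hv.1.le]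
  calc ∫ u in s..b, g u • ∫ v in u..b, P v = ∫ u, ∫ v, f (u, v) ∂μ ∂μ := by
        rw [intervalIntegral.integral_of_le hsb]
        exact setIntegral_congr_fun measurableSet_Ioc fun u hu => (inner_left u hu).symm
    _ = ∫ v, ∫ u, f (u, v) ∂μ ∂μ := integral_integral_swap hf
    _ = ∫ v in s..b, (∫ u in s..v, g u) • P v := by
        rw [intervalIntegral.integral_of_le hsb]
        exact setIntegral_congr_fun measurableSet_Ioc inner_right

theorem integral_smul_eq_smul_integral_add_integral_deriv_smul {g g' : ℝ → ℝ} {P : ℝ → E}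
    {s b : ℝ} (hsb : s ≤ b) (hg : ∀ x, HasDerivAt g (g' x) x) (hg' : Continuous g')
    (hP : IntervalIntegrable P volume s b) :
    ∫ u in s..b, g u • P u = g s • (∫ v in s..b, P v) + ∫ u in s..b, g' u • ∫ v in u..b, P v := by
  have hgP : IntervalIntegrable (fun u => g u • P u) volume s b :=
    hP.continuousOn_smul (continuous_iff_continuousAt.2 fun x => (hg x).continuousAt).continuousOn
  have hprimitive : ∀ v, ∫ u in s..v, g' u = g v - g s := fun v =>
    intervalIntegral.integral_eq_sub_of_hasDerivAt (fun x _ => hg x) (hg'.intervalIntegrable _ _)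
  rw [integral_smul_integral_eq_integral_integral_smul hsb (hg'.intervalIntegrable _ _) hP]
  simp only [hprimitive, sub_smul]
  rw [intervalIntegral.integral_sub hgP (by exact hP.smul (g s)), intervalIntegral.integral_smul]
  abel

theorem norm_integral_exp_smul_le {α s b : ℝ} (hα : 0 ≤ α) (hs : 0 ≤ s) (hsb : s ≤ b)
    {P : ℝ → E} (hP : IntervalIntegrable P volume s b) :
    ‖∫ u in s..b, exp (-α * u) • P u‖ ≤
      ‖∫ v in s..b, P v‖ + α * ∫ u in s..b, ‖∫ v in u..b, P v‖ := by
  set Q := fun u => ∫ v in u..b, P v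
  have hQ : ContinuousOn Q (Icc s b) := continuousOn_integral_Icc_left hsb hP
  have hexp_le : ∀ u, 0 ≤ u → exp (-α * u) ≤ 1 := fun u hu => exp_le_one_iff.2 (by nlinarith)
  have hderiv : ∀ x, HasDerivAt (fun u => exp (-α * u)) (exp (-α * x) * -α) x := fun x => by
    simpa using ((hasDerivAt_id x).const_mul (-α)).exp
  have hbound : ‖∫ u in s..b, (exp (-α * u) * -α) • Q u‖ ≤ α * ∫ u in s..b, ‖Q u‖ := by
    rw [← intervalIntegral.integral_const_mul]
    refine (intervalIntegral.norm_integral_le_integral_norm hsb).trans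
      (intervalIntegral.integral_mono_on hsb ?_ ?_ fun u hu => ?_)
    · exact (ContinuousOn.smul (by fun_prop) hQ).norm.intervalIntegrable_of_Icc hsb
    · exact (hQ.norm.intervalIntegrable_of_Icc hsb).const_mul α
    · rw [norm_smul, norm_mul, norm_neg, norm_of_nonneg (exp_pos _).le, norm_of_nonneg hα]
      have := hexp_le u (hs.trans hu.1)
      nlinarith [norm_nonneg (Q u), mul_nonneg hα (norm_nonneg (Q u))]
  rw [integral_smul_eq_smul_integral_add_integral_deriv_smul hsb hderiv (by fun_prop) hP]
  calc _ ≤ ‖exp (-α * s) • Q s‖ + ‖∫ u in s..b, (exp (-α * u) * -α) • Q u‖ := norm_add_le _ _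
    _ ≤ ‖Q s‖ + α * ∫ u in s..b, ‖Q u‖ := by
      refine add_le_add ?_ hbound
      rw [norm_smul, norm_of_nonneg (exp_pos _).le]
      exact mul_le_of_le_one_left (norm_nonneg _) (hexp_le s hs)

theorem sq_norm_integral_exp_smul_le {α s b : ℝ} (hα : 0 ≤ α) (hs : 0 ≤ s) (hsb : s ≤ b)
    {P : ℝ → E} (hP : IntervalIntegrable P volume 0 b) :
    ‖∫ u in s..b, exp (-α * u) • P u‖ ^ 2 ≤
      2 * ‖∫ v in s..b, P v‖ ^ 2 + 2 * α ^ 2 * (∫ u in 0..b, ‖∫ v in u..b, P v‖) ^ 2 := by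
  have hPs : IntervalIntegrable P volume s b :=
    hP.mono_set (by rw [uIcc_of_le hsb, uIcc_of_le (hs.trans hsb)]; exact Icc_subset_Icc_left hs)
  have hnorm := norm_integral_exp_smul_le hα hs hsb hPs
  have htail : ∫ u in s..b, ‖∫ v in u..b, P v‖ ≤ ∫ u in 0..b, ‖∫ v in u..b, P v‖ :=
    intervalIntegral.integral_mono_interval hs hsb le_rfl
      (Filter.Eventually.of_forall fun _ => norm_nonneg _)
      ((continuousOn_integral_Icc_left (hs.trans hsb) hP).norm.intervalIntegrable_of_Icc
        (hs.trans hsb))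
  nlinarith [norm_nonneg (∫ u in s..b, exp (-α * u) • P u), mul_le_mul_of_nonneg_left htail hα,
    sq_nonneg (‖∫ v in s..b, P v‖ - α * ∫ u in 0..b, ‖∫ v in u..b, P v‖)]

theorem sq_integral_le_integral_sq {Ω : Type*} [MeasurableSpace Ω] {μ : Measure Ω}
    [IsProbabilityMeasure μ] {f : Ω → ℝ} (hf : Integrable f μ)
    (hf2 : Integrable (fun x => f x ^ 2) μ) : (∫ x, f x ∂μ) ^ 2 ≤ ∫ x, f x ^ 2 ∂μ :=
  even_two.convexOn_pow.map_integral_le (continuous_pow 2).continuousOn isClosed_univ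
    (by simp) hf hf2

theorem sq_integral_unitInterval_le {f : ℝ → ℝ} (hf : ContinuousOn f (Icc 0 1)) :
    (∫ x in (0:ℝ)..1, f x) ^ 2 ≤ ∫ x in (0:ℝ)..1, f x ^ 2 := by
  have : IsProbabilityMeasure (volume.restrict (Ioc (0:ℝ) 1)) := ⟨by simp⟩
  simp only [intervalIntegral.integral_of_le zero_le_one]
  exact sq_integral_le_integral_sq (hf.intervalIntegrable_of_Icc zero_le_one).1
    ((hf.pow 2).intervalIntegrable_of_Icc zero_le_one).1

end

theorem stmt_9_general {n : ℕ} (α : ℝ) (hα : 0 ≤ α)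
    (P : ℝ → EuclideanSpace ℝ (Fin n))
    (hP : IntegrableOn P (Set.Icc 0 1)) :
    (∫ s in (0:ℝ)..1, ‖∫ u in s..(1:ℝ), Real.exp (-α * u) • P u‖^2) ≤
      2 * (1 + α^2) * ∫ s in (0:ℝ)..1, ‖∫ v in s..(1:ℝ), P v‖^2 := by
  set Q := fun s => ∫ v in s..(1:ℝ), P v
  set C := ∫ u in (0:ℝ)..1, ‖Q u‖
  have hP01 : IntervalIntegrable P volume 0 1 :=
    (intervalIntegrable_iff_integrableOn_Icc_of_le zero_le_one).2 hP
  have hQ := continuousOn_integral_Icc_left zero_le_one hP01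
  have hF := continuousOn_integral_Icc_left zero_le_one
    (hP01.continuousOn_smul (f := fun u => exp (-α * u)) (by fun_prop))
  have hQ2_int : IntervalIntegrable (fun u => ‖Q u‖ ^ 2) volume 0 1 :=
    (hQ.norm.pow 2).intervalIntegrable_of_Icc zero_le_one
  have hC : C ^ 2 ≤ ∫ u in (0:ℝ)..1, ‖Q u‖ ^ 2 := sq_integral_unitInterval_le hQ.norm
  calc (∫ s in (0:ℝ)..1, ‖∫ u in s..(1:ℝ), exp (-α * u) • P u‖ ^ 2)
      ≤ ∫ s in (0:ℝ)..1, (2 * ‖Q s‖ ^ 2 + 2 * α ^ 2 * C ^ 2) :=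
        intervalIntegral.integral_mono_on zero_le_one
          ((hF.norm.pow 2).intervalIntegrable_of_Icc zero_le_one)
          ((hQ2_int.const_mul 2).add intervalIntegrable_const)
          fun s hs => sq_norm_integral_exp_smul_le hα hs.1 hs.2 hP01
    _ = 2 * (∫ s in (0:ℝ)..1, ‖Q s‖ ^ 2) + 2 * α ^ 2 * C ^ 2 := by
        rw [intervalIntegral.integral_add (hQ2_int.const_mul 2) intervalIntegrable_const,
          intervalIntegral.integral_const_mul, intervalIntegral.integral_const]
        simp
    _ ≤ 2 * (1 + α ^ 2) * ∫ s in (0:ℝ)..1, ‖Q s‖ ^ 2 := by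
        nlinarith [mul_le_mul_of_nonneg_left hC (sq_nonneg α)]

/-- Estimate (29): `∫_0^1 |∫_s^1 e^{-αu} P_u du|² ds ≤ 2(1+α²) ∫_0^1 |∫_s^1 P_v dv|² ds`. -/
theorem stmt_9 {n : ℕ} (hn : 1 ≤ n) (α : ℝ) (hα : 0 ≤ α)
    (P : ℝ → EuclideanSpace ℝ (Fin n))
    (hP : IntegrableOn P (Set.Icc 0 1)) :
    (∫ s in (0:ℝ)..1, ‖∫ u in s..(1:ℝ), Real.exp (-α * u) • P u‖^2) ≤
      2 * (1 + α^2) * ∫ s in (0:ℝ)..1, ‖∫ v in s..(1:ℝ), P v‖^2 :=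
  stmt_9_general α hα P hP
end

section
/- Let α ∈ ℝ and let P, j ∈ L²([0,1]; ℝⁿ). Then ∫_0^1 ⟨P_t, α² e^{−αt} ∫_0^t e^{αu} (Kj)_u du − α (Kj)_t⟩ dt = ∫_0^1 ⟨∫_t^1 K(s,t) (α² e^{αs} ∫_s^1 e^{−αu} P_u du − α P_s) ds, j_t⟩ dt, all integrals being absolutely convergent. -/
/-!
Both sides equal `∫∫_{(0,1]²} L(t,s) ⟪P_t, j_s⟫ ds dt` for the kernel
`L(t,s) = α² e^{-αt} ∫_s^t e^{αu} K(u,s) du - α K(t,s)` (`driftKer`): on the left after exchanging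
the `u`- and `s`-integrals in `∫_0^t e^{αu} (Kj)_u du`, on the right after exchanging the two inner
integrals of `∫_t^1 K(s,t) e^{αs} ∫_s^1 e^{-αu} P_u du ds`. For `H > 1/2` the kernel satisfies
`K(t,s) ≤ c_H/(H - 1/2) · s^{1/2-H}`, hence `|L(t,s)| ≤ C s^{1/2-H}`; for `H < 1` the weight
`s^{1/2-H}` lies in `L²(0,1]`, so by Cauchy–Schwarz `L(t,s) ⟪P_t, j_s⟫` is integrable on `(0,1]²`
and Fubini's theorem justifies all three exchanges.
-/

open MeasureTheory Real Set

open scoped RealInnerProductSpace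

section Fubini

variable {X Y E : Type*} [MeasurableSpace X] [MeasurableSpace Y] {μ : Measure X} {ν : Measure Y}

section NormedSpace

variable [NormedAddCommGroup E] [NormedSpace ℝ E]

theorem integrable_smul_of_abs_le {c w : X → ℝ} {f : X → E} {C : ℝ}
    (hc : AEStronglyMeasurable c μ) (hf : AEStronglyMeasurable f μ)
    (hwf : Integrable (fun x => w x * ‖f x‖) μ) (hcw : ∀ᵐ x ∂μ, |c x| ≤ C * w x) :
    Integrable (fun x => c x • f x) μ :=
  (hwf.const_mul C).mono' (hc.smul hf) <| by
    filter_upwards [hcw] with x hx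
    rw [norm_smul, Real.norm_eq_abs, ← mul_assoc]
    exact mul_le_mul_of_nonneg_right hx (norm_nonneg _)

theorem smul_integral_sub_smul_integral {c₁ c₂ : X → ℝ} {f : X → E}
    (h₁ : Integrable (fun x => c₁ x • f x) μ) (h₂ : Integrable (fun x => c₂ x • f x) μ)
    (a b : ℝ) :
    a • ∫ x, c₁ x • f x ∂μ - b • ∫ x, c₂ x • f x ∂μ
      = ∫ x, (a * c₁ x - b * c₂ x) • f x ∂μ := by
  rw [← integral_smul, ← integral_smul, ← integral_sub]
  · simp only [sub_smul, mul_smul]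
  exacts [h₁.smul a, h₂.smul b]

end NormedSpace

variable [SFinite μ] [SFinite ν] {k : X → Y → ℝ} {w : Y → ℝ} {C : ℝ}

theorem ae_restrict_prod_of_forall {s : Set X} {t : Set Y} (hs : MeasurableSet s)
    (ht : MeasurableSet t) {p : X → Y → Prop} (h : ∀ x ∈ s, ∀ y ∈ t, p x y) :
    ∀ᵐ z ∂(μ.restrict s).prod (ν.restrict t), p z.1 z.2 := by
  rw [Measure.prod_restrict]
  filter_upwards [ae_restrict_mem (hs.prod ht)] with z hz using h _ hz.1 _ hz.2

theorem integral_smul_integral_swap [NormedAddCommGroup E] [NormedSpace ℝ E] [CompleteSpace E]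
    {f : Y → E} {φ : X → ℝ} (hφ : Integrable φ μ) (hf : AEStronglyMeasurable f ν)
    (hwf : Integrable (fun y => w y * ‖f y‖) ν)
    (hk : AEStronglyMeasurable (Function.uncurry k) (μ.prod ν))
    (hkw : ∀ᵐ z ∂μ.prod ν, |k z.1 z.2| ≤ C * w z.2) :
    Integrable (fun x => φ x • ∫ y, k x y • f y ∂ν) μ ∧
      ∫ x, φ x • ∫ y, k x y • f y ∂ν ∂μ = ∫ y, (∫ x, φ x * k x y ∂μ) • f y ∂ν := by
  set F : X × Y → E := fun z => (φ z.1 * k z.1 z.2) • f z.2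
  have hF : Integrable F (μ.prod ν) := by
    refine (hφ.norm.mul_prod (hwf.const_mul C)).mono'
      ((hφ.1.comp_fst.mul hk).smul hf.comp_snd) ?_
    filter_upwards [hkw] with z hz
    simp only [F, norm_smul, norm_mul, Real.norm_eq_abs]
    calc |φ z.1| * |k z.1 z.2| * ‖f z.2‖ ≤ |φ z.1| * (C * w z.2) * ‖f z.2‖ := by gcongr
      _ = |φ z.1| * (C * (w z.2 * ‖f z.2‖)) := by ring
  have hleft : ∀ x, ∫ y, F (x, y) ∂ν = φ x • ∫ y, k x y • f y ∂ν := fun x => by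
    simp only [F, mul_smul, integral_smul]
  have hright : ∀ y, ∫ x, F (x, y) ∂μ = (∫ x, φ x * k x y ∂μ) • f y := fun y =>
    integral_smul_const (fun x => φ x * k x y) (f y)
  simp only [← hleft, ← hright]
  exact ⟨hF.integral_prod_left, integral_integral_swap hF⟩

theorem integral_inner_integral_swap [NormedAddCommGroup E] [InnerProductSpace ℝ E]
    [CompleteSpace E] {f : Y → E} {g : X → E} (hg : Integrable g μ)
    (hf : AEStronglyMeasurable f ν) (hwf : Integrable (fun y => w y * ‖f y‖) ν)
    (hk : AEStronglyMeasurable (Function.uncurry k) (μ.prod ν))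
    (hkw : ∀ᵐ z ∂μ.prod ν, |k z.1 z.2| ≤ C * w z.2) :
    Integrable (fun x => ⟪g x, ∫ y, k x y • f y ∂ν⟫) μ ∧
      Integrable (fun y => ⟪∫ x, k x y • g x ∂μ, f y⟫) ν ∧
      ∫ x, ⟪g x, ∫ y, k x y • f y ∂ν⟫ ∂μ = ∫ y, ⟪∫ x, k x y • g x ∂μ, f y⟫ ∂ν := by
  set F : X × Y → ℝ := fun z => k z.1 z.2 * ⟪g z.1, f z.2⟫
  have hF : Integrable F (μ.prod ν) := by
    refine (hg.norm.mul_prod (hwf.const_mul C)).mono'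
      (hk.mul (hg.1.comp_fst.inner hf.comp_snd)) ?_
    filter_upwards [hkw] with z hz
    rw [norm_mul, Real.norm_eq_abs, Real.norm_eq_abs]
    calc |k z.1 z.2| * |⟪g z.1, f z.2⟫| ≤ C * w z.2 * (‖g z.1‖ * ‖f z.2‖) :=
          mul_le_mul hz (abs_real_inner_le_norm _ _) (abs_nonneg _) ((abs_nonneg _).trans hz)
      _ = ‖g z.1‖ * (C * (w z.2 * ‖f z.2‖)) := by ring
  have hkw' : ∀ᵐ y ∂ν, ∀ᵐ x ∂μ, |k x y| ≤ C * w y :=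
    Measure.ae_ae_of_ae_prod (Measure.measurePreserving_swap.quasiMeasurePreserving.ae hkw)
  have hleft : ∀ᵐ x ∂μ, ⟪g x, ∫ y, k x y • f y ∂ν⟫ = ∫ y, F (x, y) ∂ν := by
    filter_upwards [Measure.ae_ae_of_ae_prod hkw, hk.prodMk_left] with x hx hkx
    rw [← integral_inner (integrable_smul_of_abs_le (c := fun y => k x y) hkx hf hwf hx)]
    simp only [F, inner_smul_right]
  have hright : ∀ᵐ y ∂ν, ⟪∫ x, k x y • g x ∂μ, f y⟫ = ∫ x, F (x, y) ∂μ := by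
    filter_upwards [hkw', hk.prodMk_right] with y hy hky
    have hint : Integrable (fun x => k x y • g x) μ :=
      integrable_smul_of_abs_le (c := fun x => k x y) (w := fun _ => 1) hky hg.1
        (by simpa using hg.norm) (by simpa using hy)
    rw [real_inner_comm, ← integral_inner hint]
    simp only [F, inner_smul_right, real_inner_comm]
  exact ⟨hF.integral_prod_left.congr (hleft.mono fun _ h => h.symm),
    hF.integral_prod_right.congr (hright.mono fun _ h => h.symm),
    (integral_congr_ae hleft).trans <| (integral_integral_swap hF).trans
      (integral_congr_ae hright).symm⟩

end Fubini

theorem measurable_setIntegral_Ioc {X : Type*} [MeasurableSpace X] {F : X → ℝ → ℝ}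
    (hF : Measurable (Function.uncurry F)) {a b : X → ℝ} (ha : Measurable a)
    (hb : Measurable b) : Measurable fun x => ∫ u in Ioc (a x) (b x), F x u := by
  set S := {z : X × ℝ | a z.1 < z.2 ∧ z.2 ≤ b z.1}
  have hS : MeasurableSet S :=
    (measurableSet_lt (ha.comp measurable_fst) measurable_snd).inter
      (measurableSet_le measurable_snd (hb.comp measurable_fst))
  have heq : (fun x => ∫ u in Ioc (a x) (b x), F x u) =
      fun x => ∫ u, S.indicator (Function.uncurry F) (x, u) := by
    ext x
    rw [← integral_indicator measurableSet_Ioc]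
    rfl
  rw [heq]
  exact (hF.indicator hS).stronglyMeasurable.integral_prod_right'.measurable

theorem exp_mul_le_exp_abs (c : ℝ) {u : ℝ} (hu : u ∈ Icc (0:ℝ) 1) :
    exp (c * u) ≤ exp |c| :=
  exp_le_exp.2 <| by nlinarith [le_abs_self c, abs_nonneg c, hu.1, hu.2]

section Kernel

variable {H : ℝ}

theorem Ker_of_le {t s : ℝ} (h : t ≤ s) : Ker H t s = 0 := if_neg h.not_gt

theorem Ker_nonneg (t : ℝ) {s : ℝ} (hs : 0 ≤ s) : 0 ≤ Ker H t s := by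
  unfold Ker
  split_ifs with hst
  · refine mul_nonneg (mul_nonneg (sqrt_nonneg _) (rpow_nonneg hs _)) ?_
    refine intervalIntegral.integral_nonneg hst.le fun u hu => ?_
    exact mul_nonneg (rpow_nonneg (hs.trans hu.1) _) (rpow_nonneg (by linarith [hu.1]) _)
  · exact le_rfl

theorem integral_rpow_mul_sub_rpow_le (hH : 1/2 < H) {s t : ℝ} (hs : 0 < s) (hst : s ≤ t)
    (ht : t ≤ 1) :
    ∫ u in s..t, u ^ (H - 1/2) * (u - s) ^ (H - 3/2) ≤ 1 / (H - 1/2) := by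
  have hsing : IntervalIntegrable (fun u => (u - s) ^ (H - 3/2)) volume s t := by
    simpa using (intervalIntegral.intervalIntegrable_rpow' (r := H - 3/2) (by linarith)
      (a := s - s) (b := t - s)).comp_sub_right s
  have hprod : IntervalIntegrable (fun u => u ^ (H - 1/2) * (u - s) ^ (H - 3/2)) volume s t :=
    hsing.continuousOn_mul <| continuousOn_id.rpow_const fun u hu =>
      Or.inl (hs.trans_le (by rw [uIcc_of_le hst] at hu; exact hu.1)).ne'
  calc ∫ u in s..t, u ^ (H - 1/2) * (u - s) ^ (H - 3/2)
      ≤ ∫ u in s..t, (u - s) ^ (H - 3/2) :=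
        intervalIntegral.integral_mono_on hst hprod hsing fun u hu =>
          mul_le_of_le_one_left (rpow_nonneg (by linarith [hu.1]) _)
            (rpow_le_one (by linarith [hu.1]) (by linarith [hu.2]) (by linarith))
    _ = (t - s) ^ (H - 1/2) / (H - 1/2) := by
        rw [intervalIntegral.integral_comp_sub_right (fun x => x ^ (H - 3/2)),
          integral_rpow (Or.inl (by linarith)), sub_self,
          zero_rpow (by linarith), sub_zero, show H - 3/2 + 1 = H - 1/2 by ring]
    _ ≤ 1 / (H - 1/2) :=
        div_le_div_of_nonneg_right (rpow_le_one (by linarith) (by linarith) (by linarith))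
          (by linarith)

theorem Ker_le (hH : 1/2 < H) {t s : ℝ} (hs : 0 < s) (ht : t ≤ 1) :
    Ker H t s ≤ cH H / (H - 1/2) * s ^ ((1:ℝ)/2 - H) := by
  unfold Ker
  split_ifs with hst
  · calc cH H * s ^ ((1:ℝ)/2 - H) * ∫ u in s..t, u ^ (H - 1/2) * (u - s) ^ (H - 3/2)
        ≤ cH H * s ^ ((1:ℝ)/2 - H) * (1 / (H - 1/2)) :=
          mul_le_mul_of_nonneg_left (integral_rpow_mul_sub_rpow_le hH hs hst.le ht)
            (mul_nonneg (sqrt_nonneg _) (rpow_nonneg hs.le _))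
      _ = cH H / (H - 1/2) * s ^ ((1:ℝ)/2 - H) := by ring
  · exact mul_nonneg (div_nonneg (sqrt_nonneg _) (by linarith)) (rpow_nonneg hs.le _)

theorem abs_Ker_le_s10 (hH : 1/2 < H) {t s : ℝ} (hs : 0 < s) (ht : t ≤ 1) :
    |Ker H t s| ≤ cH H / (H - 1/2) * s ^ ((1:ℝ)/2 - H) := by
  rw [abs_of_nonneg (Ker_nonneg t hs.le)]
  exact Ker_le hH hs ht

theorem measurable_Ker (H : ℝ) : Measurable fun z : ℝ × ℝ => Ker H z.1 z.2 := by
  have hF : Measurable (Function.uncurry fun (z : ℝ × ℝ) (u : ℝ) =>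
      u ^ (H - 1/2) * (u - z.2) ^ (H - 3/2)) := by fun_prop
  refine Measurable.ite (measurableSet_lt measurable_snd measurable_fst) ?_ measurable_const
  exact (measurable_const.mul (measurable_snd.pow_const _)).mul
    ((measurable_setIntegral_Ioc hF measurable_snd measurable_fst).sub
      (measurable_setIntegral_Ioc hF measurable_fst measurable_snd))

end Kernel

section DriftKernel

variable (H α : ℝ)

/-- `∫_s^t e^{αu} K(u,s) du`, written over `(0,t]` since `K(u,s) = 0` for `u ≤ s`. -/
noncomputable def expKer (t s : ℝ) : ℝ := ∫ u in Ioc 0 t, exp (α * u) * Ker H u s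

noncomputable def driftKer (t s : ℝ) : ℝ :=
  α ^ 2 * exp (-α * t) * expKer H α t s - α * Ker H t s

theorem measurable_expKer : Measurable fun z : ℝ × ℝ => expKer H α z.1 z.2 :=
  measurable_setIntegral_Ioc (F := fun z u => exp (α * u) * Ker H u z.2)
    ((measurable_snd.const_mul α).exp.mul ((measurable_Ker H).comp
      (measurable_snd.prodMk measurable_fst.snd))) measurable_const measurable_fst

theorem measurable_driftKer : Measurable fun z : ℝ × ℝ => driftKer H α z.1 z.2 :=
  ((measurable_const.mul (measurable_fst.const_mul (-α)).exp).mul (measurable_expKer H α)).sub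
    (measurable_const.mul (measurable_Ker H))

variable {H}

theorem abs_expKer_le (hH : 1/2 < H) {t s : ℝ} (hs : 0 < s) (ht : t ≤ 1) :
    |expKer H α t s| ≤ exp |α| * (cH H / (H - 1/2) * s ^ ((1:ℝ)/2 - H)) := by
  set C := exp |α| * (cH H / (H - 1/2) * s ^ ((1:ℝ)/2 - H))
  have hC : 0 ≤ C := mul_nonneg (exp_nonneg _) ((abs_nonneg _).trans (abs_Ker_le_s10 hH hs ht))
  rw [← Real.norm_eq_abs, expKer]
  refine (norm_setIntegral_le_of_norm_le_const (C := C) measure_Ioc_lt_top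
    fun u hu => ?_).trans ?_
  · rw [Real.norm_eq_abs, abs_mul, abs_of_pos (exp_pos _)]
    exact mul_le_mul (exp_mul_le_exp_abs α ⟨hu.1.le, hu.2.trans ht⟩)
      (abs_Ker_le_s10 hH hs (hu.2.trans ht)) (abs_nonneg _) (exp_nonneg _)
  · rw [Real.volume_real_Ioc]
    exact mul_le_of_le_one_right hC (max_le (by linarith) zero_le_one)

theorem abs_driftKer_le (hH : 1/2 < H) {t s : ℝ} (ht : t ∈ Icc (0:ℝ) 1) (hs : 0 < s) :
    |driftKer H α t s| ≤
      (α ^ 2 * exp |α| * exp |α| + |α|) * (cH H / (H - 1/2)) * s ^ ((1:ℝ)/2 - H) := by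
  have hexp : exp (-α * t) ≤ exp |α| := by simpa using exp_mul_le_exp_abs (-α) ht
  have hE := abs_expKer_le α hH hs ht.2
  have hK := abs_Ker_le_s10 hH hs ht.2
  calc |driftKer H α t s|
      ≤ α ^ 2 * exp (-α * t) * |expKer H α t s| + |α| * |Ker H t s| := by
        refine (abs_sub _ _).trans_eq ?_
        rw [abs_mul, abs_mul, abs_mul, abs_of_pos (exp_pos _), abs_sq]
    _ ≤ α ^ 2 * exp |α| * (exp |α| * (cH H / (H - 1/2) * s ^ ((1:ℝ)/2 - H)))
          + |α| * (cH H / (H - 1/2) * s ^ ((1:ℝ)/2 - H)) := by gcongr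
    _ = _ := by ring

end DriftKernel

section UnitInterval

local notation "μI" => volume.restrict (Ioc (0:ℝ) 1)

variable {n : ℕ} {H : ℝ}

theorem Kop_eq_integral (H : ℝ) (f : ℝ → EuclideanSpace ℝ (Fin n)) {u : ℝ}
    (hu : u ∈ Icc (0:ℝ) 1) : Kop H f u = ∫ s in Ioc 0 1, Ker H u s • f s := by
  rw [Kop, intervalIntegral.integral_of_le hu.1]
  refine (setIntegral_eq_of_subset_of_forall_sdiff_eq_zero measurableSet_Ioc
    (Ioc_subset_Ioc_right hu.2) fun s hs => ?_).symm
  rw [Ker_of_le (not_le.1 fun h => hs.2 ⟨hs.1.1, h⟩).le, zero_smul]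

theorem integral_exp_smul_Kop (α : ℝ) (hH : 1/2 < H) {f : ℝ → EuclideanSpace ℝ (Fin n)}
    (hf : AEStronglyMeasurable f μI) (hwf : Integrable (fun s => s ^ ((1:ℝ)/2 - H) * ‖f s‖) μI)
    {t : ℝ} (ht : t ∈ Icc (0:ℝ) 1) :
    ∫ u in 0..t, exp (α * u) • Kop H f u = ∫ s in Ioc 0 1, expKer H α t s • f s := by
  set φ : ℝ → ℝ := (Iic t).indicator fun u => exp (α * u)
  have hφ : Integrable φ μI :=
    ((continuous_const.mul continuous_id).rexp.integrableOn_Icc.mono_set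
      Ioc_subset_Icc_self).indicator measurableSet_Iic
  have hIoc : Ioc 0 1 ∩ Iic t = Ioc 0 t := by rw [Ioc_inter_Iic, min_eq_right ht.2]
  calc ∫ u in 0..t, exp (α * u) • Kop H f u
      = ∫ u in Ioc 0 t, exp (α * u) • ∫ s in Ioc 0 1, Ker H u s • f s := by
        rw [intervalIntegral.integral_of_le ht.1]
        refine setIntegral_congr_fun measurableSet_Ioc fun u hu => ?_
        rw [Kop_eq_integral H f ⟨hu.1.le, hu.2.trans ht.2⟩]
    _ = ∫ u in Ioc 0 1, φ u • ∫ s in Ioc 0 1, Ker H u s • f s := by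
        rw [← hIoc, ← setIntegral_indicator measurableSet_Iic]
        exact integral_congr_ae (ae_of_all _ fun u => indicator_smul_apply_left _ _ _ _)
    _ = ∫ s in Ioc 0 1, (∫ u in Ioc 0 1, φ u * Ker H u s) • f s :=
        (integral_smul_integral_swap (k := Ker H) hφ hf hwf
          (measurable_Ker H).aestronglyMeasurable
          (ae_restrict_prod_of_forall measurableSet_Ioc measurableSet_Ioc
            fun _ hu _ hs => abs_Ker_le_s10 hH hs.1 hu.2)).2
    _ = ∫ s in Ioc 0 1, expKer H α t s • f s := by
        refine setIntegral_congr_fun measurableSet_Ioc fun s _ => ?_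
        rw [expKer, ← hIoc, ← setIntegral_indicator measurableSet_Iic]
        exact congrArg (· • f s) (integral_congr_ae (ae_of_all _ fun u =>
          (indicator_mul_left (Iic t) (fun u => exp (α * u)) (Ker H · s)).symm))

theorem drift_Kop_eq_integral_driftKer (α : ℝ) (hH : 1/2 < H)
    {f : ℝ → EuclideanSpace ℝ (Fin n)} (hf : AEStronglyMeasurable f μI)
    (hwf : Integrable (fun s => s ^ ((1:ℝ)/2 - H) * ‖f s‖) μI) {t : ℝ}
    (ht : t ∈ Ioc (0:ℝ) 1) :
    (α ^ 2 * exp (-α * t)) • (∫ u in (0:ℝ)..t, exp (α * u) • Kop H f u) - α • Kop H f t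
      = ∫ s in Ioc 0 1, driftKer H α t s • f s := by
  have hE : Integrable (fun s => expKer H α t s • f s) μI :=
    integrable_smul_of_abs_le (C := exp |α| * (cH H / (H - 1/2)))
      ((measurable_expKer H α).comp measurable_prodMk_left).aestronglyMeasurable hf hwf
      (ae_restrict_of_forall_mem measurableSet_Ioc fun s hs =>
        (abs_expKer_le α hH hs.1 ht.2).trans_eq (by ring))
  have hK : Integrable (fun s => Ker H t s • f s) μI :=
    integrable_smul_of_abs_le
      ((measurable_Ker H).comp measurable_prodMk_left).aestronglyMeasurable hf hwf
      (ae_restrict_of_forall_mem measurableSet_Ioc fun s hs => abs_Ker_le_s10 hH hs.1 ht.2)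
  rw [integral_exp_smul_Kop α hH hf hwf ⟨ht.1.le, ht.2⟩,
    Kop_eq_integral H f ⟨ht.1.le, ht.2⟩, smul_integral_sub_smul_integral hE hK]
  rfl

theorem intervalIntegral_eq_integral_indicator_Ioi (c : ℝ) (f : ℝ → EuclideanSpace ℝ (Fin n))
    {s : ℝ} (hs : s ∈ Icc (0:ℝ) 1) :
    ∫ u in s..1, exp (c * u) • f u
      = ∫ u in Ioc 0 1, (Ioi s).indicator (fun u => exp (c * u)) u • f u := by
  rw [intervalIntegral.integral_of_le hs.2, ← max_eq_right hs.1, ← Ioc_inter_Ioi,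
    ← setIntegral_indicator measurableSet_Ioi, max_eq_right hs.1]
  exact integral_congr_ae (ae_of_all _ fun u => indicator_smul_apply_left _ _ _ _)

theorem integral_Ker_exp_mul_indicator_Ioi (α : ℝ) {t u : ℝ} (hu : u ∈ Ioc (0:ℝ) 1) :
    ∫ s in Ioc 0 1, Ker H s t * exp (α * s) * (Ioi s).indicator (fun u => exp (-α * u)) u
      = exp (-α * u) * expKer H α u t := by
  have hIoo : Ioc 0 1 ∩ Iio u = Ioo 0 u := by
    ext s
    simp only [mem_inter_iff, mem_Ioc, mem_Iio, mem_Ioo]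
    exact ⟨fun h => ⟨h.1.1, h.2⟩, fun h => ⟨⟨h.1, h.2.le.trans hu.2⟩, h.2⟩⟩
  have hind : ∀ s, Ker H s t * exp (α * s) * (Ioi s).indicator (fun u => exp (-α * u)) u
      = (Iio u).indicator (fun s => exp (-α * u) * (exp (α * s) * Ker H s t)) s := fun s => by
    by_cases hsu : s < u
    · simp [indicator_of_mem, hsu, mul_comm]
    · simp [indicator_of_notMem, hsu]
  simp only [hind]
  rw [setIntegral_indicator measurableSet_Iio, hIoo, ← integral_Ioc_eq_integral_Ioo,
    integral_const_mul, expKer]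

theorem integral_Ker_exp_smul_tail (α : ℝ) (hH : 1/2 < H) {f : ℝ → EuclideanSpace ℝ (Fin n)}
    (hf : Integrable f μI) {t : ℝ} (ht : t ∈ Ioc (0:ℝ) 1) :
    Integrable (fun s => (Ker H s t * exp (α * s)) •
        ∫ u in Ioc 0 1, (Ioi s).indicator (fun u => exp (-α * u)) u • f u) μI ∧
      ∫ s in Ioc 0 1, (Ker H s t * exp (α * s)) •
          ∫ u in Ioc 0 1, (Ioi s).indicator (fun u => exp (-α * u)) u • f u
        = ∫ u in Ioc 0 1, (exp (-α * u) * expKer H α u t) • f u := by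
  set B := cH H / (H - 1/2) * t ^ ((1:ℝ)/2 - H)
  have hφ : Integrable (fun s => Ker H s t * exp (α * s)) μI :=
    Integrable.of_bound (((measurable_Ker H).comp (measurable_id.prodMk measurable_const)).mul
      (measurable_id.const_mul α).exp).aestronglyMeasurable (B * exp |α|) <|
      ae_restrict_of_forall_mem measurableSet_Ioc fun s hs => by
        rw [Real.norm_eq_abs, abs_mul, abs_of_pos (exp_pos _)]
        exact mul_le_mul (abs_Ker_le_s10 hH ht.1 hs.2) (exp_mul_le_exp_abs α ⟨hs.1.le, hs.2⟩)
          (exp_nonneg _) ((abs_nonneg _).trans (abs_Ker_le_s10 hH ht.1 hs.2))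
  have hk : Measurable fun z : ℝ × ℝ => (Ioi z.1).indicator (fun u => exp (-α * u)) z.2 :=
    (measurable_snd.const_mul (-α)).exp.indicator (measurableSet_lt measurable_fst measurable_snd)
  obtain ⟨hint, hswap⟩ := integral_smul_integral_swap (C := exp |α|) (w := fun _ => 1)
    (k := fun s => (Ioi s).indicator fun u => exp (-α * u)) hφ hf.1 (by simpa using hf.norm)
    hk.aestronglyMeasurable
    (ae_restrict_prod_of_forall
      (p := fun s u => |(Ioi s).indicator (fun u => exp (-α * u)) u| ≤ exp |α| * 1)
      measurableSet_Ioc measurableSet_Ioc fun s _ u hu => by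
      rw [mul_one, ← Real.norm_eq_abs]
      refine norm_indicator_le_norm_self _ _ |>.trans ?_
      rw [Real.norm_eq_abs, abs_of_pos (exp_pos _)]
      simpa using exp_mul_le_exp_abs (-α) ⟨hu.1.le, hu.2⟩)
  refine ⟨hint, hswap.trans (setIntegral_congr_fun measurableSet_Ioc fun u hu => ?_)⟩
  rw [← integral_Ker_exp_mul_indicator_Ioi α hu]

theorem adjoint_drift_eq_integral_driftKer (α : ℝ) (hH : 1/2 < H)
    {f : ℝ → EuclideanSpace ℝ (Fin n)} (hf : Integrable f μI) {t : ℝ} (ht : t ∈ Ioc (0:ℝ) 1) :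
    ∫ s in t..1, Ker H s t •
        ((α ^ 2 * exp (α * s)) • (∫ u in s..1, exp (-α * u) • f u) - α • f s)
      = ∫ u in Ioc 0 1, driftKer H α u t • f u := by
  set B := cH H / (H - 1/2) * t ^ ((1:ℝ)/2 - H)
  set R : ℝ → EuclideanSpace ℝ (Fin n) :=
    fun s => ∫ u in Ioc 0 1, (Ioi s).indicator (fun u => exp (-α * u)) u • f u
  obtain ⟨hint, hswap⟩ := integral_Ker_exp_smul_tail α hH hf ht
  have hf1 : Integrable (fun u => 1 * ‖f u‖) μI := by simpa using hf.norm
  have hKf : Integrable (fun s => Ker H s t • f s) μI :=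
    integrable_smul_of_abs_le (C := B)
      ((measurable_Ker H).comp (measurable_id.prodMk measurable_const)).aestronglyMeasurable
      hf.1 hf1 (ae_restrict_of_forall_mem measurableSet_Ioc fun s hs =>
        (abs_Ker_le_s10 hH ht.1 hs.2).trans_eq (mul_one B).symm)
  have hEf : Integrable (fun u => (exp (-α * u) * expKer H α u t) • f u) μI :=
    integrable_smul_of_abs_le (C := exp |α| * (exp |α| * B))
      (((measurable_id.const_mul (-α)).exp.mul ((measurable_expKer H α).comp
        (measurable_id.prodMk measurable_const)))).aestronglyMeasurable hf.1 hf1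
      (ae_restrict_of_forall_mem measurableSet_Ioc fun u hu => by
        rw [mul_one, abs_mul, abs_of_pos (exp_pos _)]
        exact mul_le_mul (by simpa using exp_mul_le_exp_abs (-α) ⟨hu.1.le, hu.2⟩)
          (abs_expKer_le α hH ht.1 hu.2) (abs_nonneg _) (exp_nonneg _))
  calc ∫ s in t..1, Ker H s t •
        ((α ^ 2 * exp (α * s)) • (∫ u in s..1, exp (-α * u) • f u) - α • f s)
      = ∫ s in Ioc t 1, Ker H s t • ((α ^ 2 * exp (α * s)) • R s - α • f s) := by
        rw [intervalIntegral.integral_of_le ht.2]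
        refine setIntegral_congr_fun measurableSet_Ioc fun s hs => ?_
        rw [intervalIntegral_eq_integral_indicator_Ioi (-α) f ⟨ht.1.le.trans hs.1.le, hs.2⟩]
    _ = ∫ s in Ioc 0 1, Ker H s t • ((α ^ 2 * exp (α * s)) • R s - α • f s) :=
        (setIntegral_eq_of_subset_of_forall_sdiff_eq_zero measurableSet_Ioc
          (Ioc_subset_Ioc_left ht.1.le) fun s hs => by
            rw [Ker_of_le (not_lt.1 fun h => hs.2 ⟨h, hs.1.2⟩), zero_smul]).symm
    _ = ∫ s in Ioc 0 1,
          (α ^ 2 • ((Ker H s t * exp (α * s)) • R s) - α • (Ker H s t • f s)) := by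
        refine integral_congr_ae (ae_of_all _ fun s => ?_)
        module
    _ = α ^ 2 • (∫ s in Ioc 0 1, (Ker H s t * exp (α * s)) • R s)
          - α • ∫ s in Ioc 0 1, Ker H s t • f s := by
        rw [← integral_smul, ← integral_smul, ← integral_sub]
        exacts [hint.smul (α ^ 2), hKf.smul α]
    _ = ∫ u in Ioc 0 1, driftKer H α u t • f u := by
        rw [hswap, smul_integral_sub_smul_integral hEf hKf]
        simp only [driftKer, mul_assoc]

theorem memLp_two_rpow_Ioc {r : ℝ} (hr : -1/2 < r) : MemLp (fun s : ℝ => s ^ r) 2 μI := by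
  refine (memLp_two_iff_integrable_sq (measurable_id.pow_const r).aestronglyMeasurable).2 ?_
  have h := intervalIntegral.intervalIntegrable_rpow' (r := 2 * r) (by linarith) (a := 0) (b := 1)
  rw [intervalIntegrable_iff_integrableOn_Ioc_of_le zero_le_one] at h
  refine h.congr_fun (fun s hs => ?_) measurableSet_Ioc
  simp only [id, mul_comm (2:ℝ), rpow_mul hs.1.le]
  norm_cast

theorem integrable_rpow_mul_norm {E : Type*} [NormedAddCommGroup E] (hH : H < 1) {f : ℝ → E}
    (hf : MemLp f 2 μI) : Integrable (fun s => s ^ ((1:ℝ)/2 - H) * ‖f s‖) μI :=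
  (memLp_two_rpow_Ioc (by linarith)).integrable_mul hf.norm

end UnitInterval

theorem stmt_10_general (H : ℝ) (hH : H ∈ Set.Ioo (1/2 : ℝ) 1) (n : ℕ)
    (α : ℝ) (P j : ℝ → EuclideanSpace ℝ (Fin n))
    (hP : MemLp P 2 (volume.restrict (Set.Ioc (0:ℝ) 1)))
    (hj : MemLp j 2 (volume.restrict (Set.Ioc (0:ℝ) 1))) :
    IntegrableOn
      (fun t => ⟪P t,
        (α^2 * Real.exp (-α * t)) • (∫ u in (0:ℝ)..t, Real.exp (α * u) • Kop H j u)
          - α • Kop H j t⟫) (Set.Ioc 0 1) ∧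
    IntegrableOn
      (fun t => ⟪∫ s in t..(1:ℝ),
          Ker H s t • ((α^2 * Real.exp (α * s)) • (∫ u in s..(1:ℝ), Real.exp (-α * u) • P u)
            - α • P s), j t⟫) (Set.Ioc 0 1) ∧
    (∫ t in Set.Ioc (0:ℝ) 1,
        ⟪P t,
          (α^2 * Real.exp (-α * t)) • (∫ u in (0:ℝ)..t, Real.exp (α * u) • Kop H j u)
            - α • Kop H j t⟫)
      = ∫ t in Set.Ioc (0:ℝ) 1,
          ⟪∫ s in t..(1:ℝ),
            Ker H s t • ((α^2 * Real.exp (α * s)) • (∫ u in s..(1:ℝ), Real.exp (-α * u) • P u)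
              - α • P s), j t⟫ := by
  obtain ⟨hH₁, hH₂⟩ := hH
  have hjw := integrable_rpow_mul_norm hH₂ hj
  have hPi : Integrable P (volume.restrict (Ioc 0 1)) := hP.integrable one_le_two
  obtain ⟨hL, hR, heq⟩ := integral_inner_integral_swap (k := driftKer H α)
    (C := (α ^ 2 * exp |α| * exp |α| + |α|) * (cH H / (H - 1/2))) hPi hj.1 hjw
    (measurable_driftKer H α).aestronglyMeasurable
    (ae_restrict_prod_of_forall measurableSet_Ioc measurableSet_Ioc fun t ht s hs =>
      abs_driftKer_le α hH₁ ⟨ht.1.le, ht.2⟩ hs.1)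
  refine ⟨hL.congr ?_, hR.congr ?_,
    (integral_congr_ae ?_).trans (heq.trans (integral_congr_ae ?_))⟩
  all_goals
    filter_upwards [ae_restrict_mem measurableSet_Ioc] with t ht
    simp only [drift_Kop_eq_integral_driftKer α hH₁ hj.1 hjw ht,
      adjoint_drift_eq_integral_driftKer α hH₁ hPi ht]

/-- The adjoint (Fubini) identity (26), all integrals absolutely convergent. -/
theorem stmt_10 (H : ℝ) (hH : H ∈ Set.Ioo (1/2 : ℝ) 1) (n : ℕ) (hn : 1 ≤ n)
    (α : ℝ) (P j : ℝ → EuclideanSpace ℝ (Fin n))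
    (hP : MemLp P 2 (volume.restrict (Set.Ioc (0:ℝ) 1)))
    (hj : MemLp j 2 (volume.restrict (Set.Ioc (0:ℝ) 1))) :
    IntegrableOn
      (fun t => ⟪P t,
        (α^2 * Real.exp (-α * t)) • (∫ u in (0:ℝ)..t, Real.exp (α * u) • Kop H j u)
          - α • Kop H j t⟫) (Set.Ioc 0 1) ∧
    IntegrableOn
      (fun t => ⟪∫ s in t..(1:ℝ),
          Ker H s t • ((α^2 * Real.exp (α * s)) • (∫ u in s..(1:ℝ), Real.exp (-α * u) • P u)
            - α • P s), j t⟫) (Set.Ioc 0 1) ∧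
    (∫ t in Set.Ioc (0:ℝ) 1,
        ⟪P t,
          (α^2 * Real.exp (-α * t)) • (∫ u in (0:ℝ)..t, Real.exp (α * u) • Kop H j u)
            - α • Kop H j t⟫)
      = ∫ t in Set.Ioc (0:ℝ) 1,
          ⟪∫ s in t..(1:ℝ),
            Ker H s t • ((α^2 * Real.exp (α * s)) • (∫ u in s..(1:ℝ), Real.exp (-α * u) • P u)
              - α • P s), j t⟫ :=
  stmt_10_general H hH n α P j hP hj
end

section
/- For every H ∈ (1/2, 1) and every t ∈ [0,1], (H − 1/2)² ∫_t^1 (∫_0^t (s−u)^{−(1/2+H)} du)² ds ≤ 4/(2−2H). In fact, (H − 1/2)² ∫_t^1 (∫_0^t (s−u)^{−(1/2+H)} du)² ds ≤ (2/(2−2H)) (1 + (1−t)^{2−2H} − t^{2−2H}). -/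
open MeasureTheory Real Set

/-- Estimate (34): for `H ∈ (1/2,1)` and `t ∈ [0,1]`,
`(H-1/2)² ∫_t^1 (∫_0^t (s-u)^{-(1/2+H)} du)² ds` is bounded by
`(2/(2-2H))(1+(1-t)^{2-2H}-t^{2-2H})`, hence by `4/(2-2H)`. -/
theorem stmt_12 (H : ℝ) (hH : H ∈ Set.Ioo (1/2 : ℝ) 1) (t : ℝ) (ht : t ∈ Set.Icc (0:ℝ) 1) :
    (H - 1/2)^2 * (∫ s in t..(1:ℝ), (∫ u in (0:ℝ)..t, (s - u) ^ (-(1/2 + H)))^2)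
        ≤ 2 / (2 - 2*H) * (1 + (1 - t) ^ (2 - 2*H) - t ^ (2 - 2*H)) ∧
    (H - 1/2)^2 * (∫ s in t..(1:ℝ), (∫ u in (0:ℝ)..t, (s - u) ^ (-(1/2 + H)))^2)
        ≤ 4 / (2 - 2*H) := by
  obtain ⟨hH1, hH2⟩ := hH
  obtain ⟨ht0, ht1⟩ := ht
  have h2H : (0:ℝ) < 2 - 2*H := by linarith
  set g : ℝ → ℝ := fun s => ((s - t) ^ (1/2 - H : ℝ) - s ^ (1/2 - H : ℝ))^2 with hgdef
  set h : ℝ → ℝ := fun s => (s - t) ^ (1 - 2*H : ℝ) with hhdef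
  -- pointwise g ≤ h for t < s
  have hgh : ∀ s : ℝ, t < s → g s ≤ h s := by
    intro s hts
    have hst : (0:ℝ) < s - t := by linarith
    have hs0 : (0:ℝ) < s := lt_of_le_of_lt ht0 hts
    have hba : s ^ (1/2 - H : ℝ) ≤ (s - t) ^ (1/2 - H : ℝ) :=
      Real.rpow_le_rpow_of_nonpos hst (by linarith) (by linarith)
    have hb0 : (0:ℝ) ≤ s ^ (1/2 - H : ℝ) := Real.rpow_nonneg hs0.le _
    have hsq : h s = ((s - t) ^ (1/2 - H : ℝ))^2 := by
      show (s - t) ^ (1 - 2*H : ℝ) = _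
      rw [show (1 - 2*H : ℝ) = (1/2 - H) + (1/2 - H) by ring,
        Real.rpow_add hst, sq]
    rw [hsq]
    show ((s - t) ^ (1/2 - H : ℝ) - s ^ (1/2 - H : ℝ))^2 ≤ _
    nlinarith
  -- Step 1: rewrite the LHS
  have key : (H - 1/2)^2 * (∫ s in t..(1:ℝ), (∫ u in (0:ℝ)..t, (s - u) ^ (-(1/2 + H)))^2)
      = ∫ s in t..(1:ℝ), g s := by
    rw [← intervalIntegral.integral_const_mul]
    apply intervalIntegral.integral_congr_ae
    rw [Set.uIoc_of_le ht1]
    filter_upwards with s hs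
    have hts : t < s := hs.1
    have hst : (0:ℝ) < s - t := by linarith
    have hs0 : (0:ℝ) < s := lt_of_le_of_lt ht0 hts
    have hinner : (∫ u in (0:ℝ)..t, (s - u) ^ (-(1/2 + H)))
        = (s ^ (1/2 - H : ℝ) - (s - t) ^ (1/2 - H : ℝ)) / (1/2 - H) := by
      rw [intervalIntegral.integral_comp_sub_left (fun x : ℝ => x ^ (-(1/2 + H) : ℝ)) s,
        sub_zero]
      rw [integral_rpow (Or.inr ⟨by intro hc; have := neg_injective hc; linarith,
        Set.notMem_uIcc_of_lt hst hs0⟩)]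
      rw [show (-(1/2 + H) + 1 : ℝ) = 1/2 - H by ring]
    rw [hinner]
    show _ = ((s - t) ^ (1/2 - H : ℝ) - s ^ (1/2 - H : ℝ))^2
    have hne : ((1:ℝ)/2 - H) ≠ 0 := by intro hc; rw [sub_eq_zero] at hc; linarith
    rw [div_pow, show (((1:ℝ)/2 - H))^2 = (H - 1/2)^2 by ring,
      mul_div_cancel₀ _ (pow_ne_zero 2 (by intro hc; rw [sub_eq_zero] at hc; linarith))]
    ring
  -- integrability of h
  have hInth : IntervalIntegrable h volume t 1 := by
    have := (intervalIntegral.intervalIntegrable_rpow' (a := 0) (b := 1 - t) (r := 1 - 2*H)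
      (by linarith)).comp_sub_right t
    simpa [hhdef] using this
  -- integrability of g
  have hIntg : IntervalIntegrable g volume t 1 := by
    apply hInth.mono_fun'
    · apply Measurable.aestronglyMeasurable
      fun_prop
    · rw [Set.uIoc_of_le ht1]
      filter_upwards [ae_restrict_mem measurableSet_Ioc] with s hs
      have := hgh s hs.1
      have hg0 : 0 ≤ g s := sq_nonneg _
      simpa [Real.norm_eq_abs, abs_of_nonneg hg0] using this
  -- Step 2: comparison
  have hmono : (∫ s in t..(1:ℝ), g s) ≤ ∫ s in t..(1:ℝ), h s := by
    apply intervalIntegral.integral_mono_ae_restrict ht1 hIntg hInth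
    have hne : ∀ᵐ s : ℝ, s ≠ t := by
      rw [ae_iff]
      simp only [not_not, setOf_eq_eq_singleton]
      exact measure_singleton t
    filter_upwards [ae_restrict_mem measurableSet_Icc,
      hne.filter_mono (ae_mono Measure.restrict_le_self)] with s hs hsne
    exact hgh s (lt_of_le_of_ne hs.1 (Ne.symm hsne))
  -- Step 3: compute ∫ h
  have hcomp : (∫ s in t..(1:ℝ), h s) = (1 - t) ^ (2 - 2*H) / (2 - 2*H) := by
    rw [hhdef]
    rw [intervalIntegral.integral_comp_sub_right (fun x : ℝ => x ^ (1 - 2*H : ℝ)) t,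
      sub_self]
    rw [integral_rpow (Or.inl (by linarith))]
    rw [Real.zero_rpow (by intro hc; linarith : (1 - 2*H + 1 : ℝ) ≠ 0)]
    rw [show (1 - 2*H + 1 : ℝ) = 2 - 2*H by ring]
    ring
  -- Step 4: arithmetic
  have hA0 : (0:ℝ) ≤ (1 - t) ^ (2 - 2*H) := Real.rpow_nonneg (by linarith) _
  have hA1 : (1 - t) ^ (2 - 2*H) ≤ 1 := Real.rpow_le_one (by linarith) (by linarith) h2H.le
  have hB0 : (0:ℝ) ≤ t ^ (2 - 2*H) := Real.rpow_nonneg ht0 _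
  have hB1 : t ^ (2 - 2*H) ≤ 1 := Real.rpow_le_one ht0 ht1 h2H.le
  have hle : (H - 1/2)^2 * (∫ s in t..(1:ℝ), (∫ u in (0:ℝ)..t, (s - u) ^ (-(1/2 + H)))^2)
      ≤ (1 - t) ^ (2 - 2*H) / (2 - 2*H) := by
    rw [key, ← hcomp]; exact hmono
  constructor
  · refine hle.trans ?_
    rw [div_mul_eq_mul_div, div_le_div_iff₀ h2H h2H]
    nlinarith
  · refine hle.trans ?_
    rw [div_le_div_iff₀ h2H h2H]
    nlinarith
end

section
/- Let C₁ > 0 be such that 0 ≤ K(u,t) ≤ C₁ t^{1/2−H} for all 0 < t < u ≤ 1. Then for every t ∈ (0,1], ∫_t^1 (s^{H−1/2} ∫_t^s (u^{1/2−H} − s^{1/2−H}) K(u,t) (s−u)^{−(1/2+H)} du)² ds ≤ C₁² C₂² t^{1−2H} / (2−2H). -/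
open MeasureTheory Real Set

lemma aux_bern {q u s : ℝ} (hq0 : 0 < q) (hq1 : q ≤ 1) (hu : 0 < u) (hus : u ≤ s) :
    u ^ (-q) - s ^ (-q) ≤ q * u ^ (-q - 1) * (s - u) := by
  have hs : 0 < s := hu.trans_le hus
  set r : ℝ := s / u with hr
  have hr1 : 1 ≤ r := (one_le_div hu).2 hus
  have hr0 : 0 < r := lt_of_lt_of_le one_pos hr1
  have husr : s = u * r := by rw [hr]; field_simp
  have hA : (0:ℝ) < u ^ (-q) := Real.rpow_pos_of_pos hu _
  have hAB : u ^ (-q - 1) * u = u ^ (-q) := by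
    rw [← Real.rpow_add_one hu.ne']; ring_nf
  have hRq : (0:ℝ) < r ^ q := Real.rpow_pos_of_pos hr0 _
  have hRq1 : 1 ≤ r ^ q := Real.one_le_rpow hr1 hq0.le
  have h3 : r ^ q - 1 ≤ q * (r - 1) := by
    have := rpow_one_add_le_one_add_mul_self (s := r - 1) (by linarith) hq0.le hq1
    simp only [add_sub_cancel] at this
    linarith
  have hE : s ^ (-q) = u ^ (-q) * (r ^ q)⁻¹ := by
    rw [husr, Real.mul_rpow hu.le hr0.le, Real.rpow_neg hr0.le]
  have hinv : r ^ q * (r ^ q)⁻¹ = 1 := mul_inv_cancel₀ hRq.ne'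
  have h4 : 1 - (r ^ q)⁻¹ ≤ q * (r - 1) := by
    nlinarith [hinv, h3, hRq, hRq1, inv_pos.2 hRq,
      mul_nonneg (mul_nonneg hq0.le (sub_nonneg.2 hr1)) (sub_nonneg.2 hRq1)]
  have hrhs : q * u ^ (-q - 1) * (u * r - u) = q * u ^ (-q) * (r - 1) := by
    rw [← hAB]; ring
  rw [hE, husr, hrhs]
  nlinarith [mul_le_mul_of_nonneg_left h4 hA.le]

lemma aux_meas (a b s : ℝ) : Measurable (fun u : ℝ => (u ^ a - s ^ a) * (s - u) ^ b) := by
  have m1 : Measurable fun x : ℝ => x ^ a := by measurability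
  have m2 : Measurable fun x : ℝ => x ^ b := by measurability
  exact (m1.sub measurable_const).mul (m2.comp (measurable_const.sub measurable_id))

lemma aux_int {H : ℝ} (hH1 : 1/2 < H) (hH2 : H < 1) {s : ℝ} (hs : 0 < s) :
    IntervalIntegrable (fun u : ℝ => (u ^ ((1:ℝ)/2 - H) - s ^ ((1:ℝ)/2 - H)) * (s - u) ^ (-(1/2 + H)))
      volume 0 s := by
  set a : ℝ := (1:ℝ)/2 - H with ha
  set b : ℝ := -(1/2 + H) with hb
  have ha0 : a < 0 := by rw [ha]; linarith
  have ha1 : -1 < a := by rw [ha]; linarith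
  have hb0 : b < 0 := by rw [hb]; linarith
  have hb1 : -1 < 1 + b := by rw [hb]; linarith
  have hb2 : (1:ℝ) + b ≠ 0 := by rw [hb]; intro h; norm_num at h; linarith
  rw [intervalIntegrable_iff, uIoc_of_le hs.le]
  have hsub : Ioc (0:ℝ) s ⊆ Ioc 0 (s/2) ∪ Ioc (s/2) s := by
    intro x hx
    rcases le_or_gt x (s/2) with h | h
    · exact Or.inl ⟨hx.1, h⟩
    · exact Or.inr ⟨h, hx.2⟩
  refine (IntegrableOn.union ?_ ?_).mono_set hsub
  · -- near 0 : dominated by (s/2)^b * u^a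
    have hdom : IntegrableOn (fun u : ℝ => (s/2) ^ b * u ^ a) (Ioc 0 (s/2)) := by
      have := (intervalIntegral.intervalIntegrable_rpow' (a := 0) (b := s/2) ha1).const_mul
        ((s/2) ^ b)
      rwa [intervalIntegrable_iff, uIoc_of_le (by linarith)] at this
    refine Integrable.mono' hdom ((aux_meas a b s).aestronglyMeasurable) ?_
    refine (ae_restrict_iff' measurableSet_Ioc).2 (ae_of_all _ ?_)
    intro u hu
    obtain ⟨hu0, hu2⟩ := hu
    have hus : u ≤ s := hu2.trans (by linarith)
    have h1 : 0 ≤ u ^ a - s ^ a := sub_nonneg.2 (Real.rpow_le_rpow_of_nonpos hu0 hus ha0.le)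
    have h2 : (0:ℝ) ≤ (s - u) ^ b := Real.rpow_nonneg (by linarith) _
    rw [Real.norm_eq_abs, abs_of_nonneg (mul_nonneg h1 h2)]
    have h3 : u ^ a - s ^ a ≤ u ^ a := by
      have : (0:ℝ) ≤ s ^ a := Real.rpow_nonneg hs.le _
      linarith
    have h4 : (s - u) ^ b ≤ (s/2) ^ b :=
      Real.rpow_le_rpow_of_nonpos (by linarith) (by linarith) hb0.le
    calc (u ^ a - s ^ a) * (s - u) ^ b ≤ u ^ a * (s/2) ^ b :=
          mul_le_mul h3 h4 h2 (Real.rpow_nonneg hu0.le _)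
      _ = (s/2) ^ b * u ^ a := mul_comm _ _
  · -- near s : dominated by (H-1/2) * (s/2)^(a-1) * (s-u)^(1+b)
    set q : ℝ := H - 1/2 with hq
    have hq0 : 0 < q := by rw [hq]; linarith
    have hq1 : q ≤ 1 := by rw [hq]; linarith
    have hdom : IntegrableOn (fun u : ℝ => q * (s/2) ^ (a-1) * (s - u) ^ (1+b)) (Ioc (s/2) s) := by
      have h0 : IntervalIntegrable (fun x : ℝ => x ^ (1+b)) volume 0 (s/2) :=
        intervalIntegral.intervalIntegrable_rpow' hb1
      have h2 : IntervalIntegrable (fun u : ℝ => (s - u) ^ (1+b)) volume (s/2) s := by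
        have := (h0.comp_sub_left s).symm
        rw [show s - s/2 = s/2 by ring, sub_zero] at this
        exact this
      have := h2.const_mul (q * (s/2) ^ (a-1))
      rwa [intervalIntegrable_iff, uIoc_of_le (by linarith)] at this
    refine Integrable.mono' hdom ((aux_meas a b s).aestronglyMeasurable) ?_
    refine (ae_restrict_iff' measurableSet_Ioc).2 (ae_of_all _ ?_)
    intro u hu
    have hu0 : 0 < u := lt_trans (by linarith [hu.1] : (0:ℝ) < s/2) hu.1
    have hus : u ≤ s := hu.2
    have h1 : 0 ≤ u ^ a - s ^ a := sub_nonneg.2 (Real.rpow_le_rpow_of_nonpos hu0 hus ha0.le)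
    have h2 : (0:ℝ) ≤ (s - u) ^ b := Real.rpow_nonneg (by linarith) _
    rw [Real.norm_eq_abs, abs_of_nonneg (mul_nonneg h1 h2)]
    rcases eq_or_lt_of_le hus with rfl | huslt
    · simp [sub_self, Real.zero_rpow hb2]
    · have hsu : 0 < s - u := by linarith
      have hbern : u ^ a - s ^ a ≤ q * u ^ (a - 1) * (s - u) := by
        have e : a = -q := by rw [ha, hq]; ring
        have h := aux_bern hq0 hq1 hu0 hus
        rw [e]
        exact h
      have hu1 : u ^ (a-1) ≤ (s/2) ^ (a-1) :=
        Real.rpow_le_rpow_of_nonpos (by linarith) hu.1.le (by linarith)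
      have key : (u ^ a - s ^ a) * (s - u) ^ b ≤ (q * (s/2) ^ (a-1) * (s - u)) * (s - u) ^ b := by
        apply mul_le_mul_of_nonneg_right _ h2
        calc u ^ a - s ^ a ≤ q * u ^ (a-1) * (s - u) := hbern
          _ ≤ q * (s/2) ^ (a-1) * (s - u) :=
              mul_le_mul_of_nonneg_right (mul_le_mul_of_nonneg_left hu1 hq0.le) hsu.le
      refine key.trans (le_of_eq ?_)
      rw [Real.rpow_add hsu 1 b, Real.rpow_one]
      ring

lemma aux_val {H : ℝ} (hH1 : 1/2 < H) (hH2 : H < 1) {s : ℝ} (hs : 0 < s) :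
    ∫ u in (0:ℝ)..s, (u ^ ((1:ℝ)/2 - H) - s ^ ((1:ℝ)/2 - H)) * (s - u) ^ (-(1/2 + H))
      = s ^ (1 - 2*H) * C2 H := by
  set a : ℝ := (1:ℝ)/2 - H with ha
  set b : ℝ := -(1/2 + H) with hb
  have key : ∫ u in (0:ℝ)..s, (u ^ a - s ^ a) * (s - u) ^ b
      = ∫ u in (0:ℝ)..s, s ^ (a + b) * (((u * s⁻¹) ^ a - 1) * (1 - u * s⁻¹) ^ b) := by
    rw [intervalIntegral.integral_of_le hs.le, intervalIntegral.integral_of_le hs.le,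
      MeasureTheory.integral_Ioc_eq_integral_Ioo, MeasureTheory.integral_Ioc_eq_integral_Ioo]
    apply setIntegral_congr_fun measurableSet_Ioo
    intro u hu
    obtain ⟨hu0, hus⟩ := hu
    have hsu : 0 < s - u := by linarith
    have e1 : (u * s⁻¹) ^ a = u ^ a * (s ^ a)⁻¹ := by
      rw [Real.mul_rpow hu0.le (by positivity), Real.inv_rpow hs.le]
    have e2 : (1 - u * s⁻¹) ^ b = (s - u) ^ b * (s ^ b)⁻¹ := by
      rw [show (1 : ℝ) - u * s⁻¹ = (s - u) * s⁻¹ by field_simp,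
        Real.mul_rpow hsu.le (by positivity), Real.inv_rpow hs.le]
    have e3 : s ^ (a + b) = s ^ a * s ^ b := Real.rpow_add hs _ _
    have hsa : (0:ℝ) < s ^ a := Real.rpow_pos_of_pos hs _
    have hsb : (0:ℝ) < s ^ b := Real.rpow_pos_of_pos hs _
    simp only [e1, e2, e3]
    field_simp
  rw [key, intervalIntegral.integral_const_mul]
  have comp := intervalIntegral.integral_comp_mul_right (a := 0) (b := s)
    (fun v : ℝ => (v ^ a - 1) * (1 - v) ^ b) (inv_ne_zero hs.ne')
  simp only [zero_mul, mul_inv_cancel₀ hs.ne', inv_inv, smul_eq_mul] at comp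
  rw [comp]
  have hC2 : C2 H = ∫ v in (0:ℝ)..1, (v ^ a - 1) * (1 - v) ^ b := rfl
  rw [hC2, show a + b = -(2*H) by rw [ha, hb]; ring,
    show 1 - 2*H = -(2*H) + 1 by ring, Real.rpow_add_one hs.ne']
  ring


lemma aux_C2_nonneg {H : ℝ} (hH1 : 1/2 < H) : 0 ≤ C2 H := by
  rw [C2, intervalIntegral.integral_of_le zero_le_one]
  apply setIntegral_nonneg measurableSet_Ioc
  intro v hv
  apply mul_nonneg
  · have : (1:ℝ) ≤ v ^ ((1:ℝ)/2 - H) :=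
      Real.one_le_rpow_of_pos_of_le_one_of_nonpos hv.1 hv.2 (by linarith)
    linarith
  · exact Real.rpow_nonneg (by linarith [hv.2]) _

/-- Estimate (42): if `0 ≤ K(u,t) ≤ C₁ t^{1/2-H}` for `0 < t < u ≤ 1`, then
`∫_t^1 (s^{H-1/2} ∫_t^s (u^{1/2-H}-s^{1/2-H}) K(u,t) (s-u)^{-(1/2+H)} du)² ds
  ≤ C₁² C₂² t^{1-2H}/(2-2H)`. -/
theorem stmt_15 (H : ℝ) (hH : H ∈ Set.Ioo (1/2 : ℝ) 1)
    (C₁ : ℝ) (hC₁ : 0 < C₁)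
    (hK : ∀ t u : ℝ, 0 < t → t < u → u ≤ 1 →
      0 ≤ Ker H u t ∧ Ker H u t ≤ C₁ * t ^ ((1:ℝ)/2 - H)) :
    ∀ t ∈ Set.Ioc (0:ℝ) 1,
      (∫ s in t..(1:ℝ),
          (s ^ (H - 1/2) *
            ∫ u in t..s,
              (u ^ ((1:ℝ)/2 - H) - s ^ ((1:ℝ)/2 - H)) * Ker H u t * (s - u) ^ (-(1/2 + H)))^2)
        ≤ C₁^2 * (C2 H)^2 * t ^ (1 - 2*H) / (2 - 2*H) := by
  obtain ⟨hH1, hH2⟩ := hH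
  intro t ht
  obtain ⟨ht0, ht1⟩ := ht
  have h2H : (0:ℝ) < 2 - 2*H := by linarith
  have hC2 : 0 ≤ C2 H := aux_C2_nonneg hH1
  set D : ℝ := C₁^2 * (C2 H)^2 * t ^ (1 - 2*H) with hD
  have hD0 : 0 ≤ D := by positivity
  -- pointwise bound for the squared integrand
  have key : ∀ s ∈ Icc t 1,
      (s ^ (H - 1/2) *
        ∫ u in t..s,
          (u ^ ((1:ℝ)/2 - H) - s ^ ((1:ℝ)/2 - H)) * Ker H u t * (s - u) ^ (-(1/2 + H)))^2
        ≤ D * s ^ (1 - 2*H) := by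
    intro s hsm
    obtain ⟨hts, hs1⟩ := hsm
    have hs0 : 0 < s := lt_of_lt_of_le ht0 hts
    set g : ℝ → ℝ :=
      fun u => (u ^ ((1:ℝ)/2 - H) - s ^ ((1:ℝ)/2 - H)) * (s - u) ^ (-(1/2 + H)) with hg
    set f : ℝ → ℝ :=
      fun u => (u ^ ((1:ℝ)/2 - H) - s ^ ((1:ℝ)/2 - H)) * Ker H u t * (s - u) ^ (-(1/2 + H))
      with hf
    have hKer : ∀ u, t ≤ u → u ≤ s →
        0 ≤ Ker H u t ∧ Ker H u t ≤ C₁ * t ^ ((1:ℝ)/2 - H) := by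
      intro u hu1 hu2
      rcases eq_or_lt_of_le hu1 with rfl | h
      · constructor
        · simp [Ker]
        · simp only [Ker, lt_irrefl, if_false]
          positivity
      · exact hK t u ht0 h (hu2.trans hs1)
    have hgpos : ∀ u, 0 < u → u ≤ s → 0 ≤ g u := by
      intro u h1 h2
      apply mul_nonneg
      · have := Real.rpow_le_rpow_of_nonpos h1 h2 (show (1:ℝ)/2 - H ≤ 0 by linarith)
        linarith
      · exact Real.rpow_nonneg (by linarith) _
    have hfpos : ∀ u ∈ Icc t s, 0 ≤ f u := by
      intro u hu
      have h1 : 0 < u := lt_of_lt_of_le ht0 hu.1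
      refine mul_nonneg (mul_nonneg ?_ (hKer u hu.1 hu.2).1) (Real.rpow_nonneg (by linarith [hu.2]) _)
      have := Real.rpow_le_rpow_of_nonpos h1 hu.2 (show (1:ℝ)/2 - H ≤ 0 by linarith)
      linarith
    have hfg : ∀ u ∈ Icc t s, f u ≤ C₁ * t ^ ((1:ℝ)/2 - H) * g u := by
      intro u hu
      have h1 : 0 < u := lt_of_lt_of_le ht0 hu.1
      have ha : 0 ≤ u ^ ((1:ℝ)/2 - H) - s ^ ((1:ℝ)/2 - H) := by
        have := Real.rpow_le_rpow_of_nonpos h1 hu.2 (show (1:ℝ)/2 - H ≤ 0 by linarith)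
        linarith
      have hb : (0:ℝ) ≤ (s - u) ^ (-(1/2 + H)) := Real.rpow_nonneg (by linarith [hu.2]) _
      have := (hKer u hu.1 hu.2).2
      calc f u = (u ^ ((1:ℝ)/2 - H) - s ^ ((1:ℝ)/2 - H)) * Ker H u t * (s - u) ^ (-(1/2 + H)) :=
            rfl
        _ ≤ (u ^ ((1:ℝ)/2 - H) - s ^ ((1:ℝ)/2 - H)) * (C₁ * t ^ ((1:ℝ)/2 - H))
              * (s - u) ^ (-(1/2 + H)) := by
            apply mul_le_mul_of_nonneg_right (mul_le_mul_of_nonneg_left this ha) hb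
        _ = C₁ * t ^ ((1:ℝ)/2 - H) * g u := by rw [hg]; ring
    have hI0 : 0 ≤ ∫ u in t..s, f u := intervalIntegral.integral_nonneg hts hfpos
    have hg0s : IntervalIntegrable g volume 0 s := aux_int hH1 hH2 hs0
    have hgts : IntervalIntegrable g volume t s := by
      apply hg0s.mono_set
      rw [uIcc_of_le hts, uIcc_of_le hs0.le]
      exact Icc_subset_Icc ht0.le le_rfl
    have hg0t : IntervalIntegrable g volume 0 t := by
      apply hg0s.mono_set
      rw [uIcc_of_le ht0.le, uIcc_of_le hs0.le]
      exact Icc_subset_Icc le_rfl hts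
    have h0t : 0 ≤ ∫ u in (0:ℝ)..t, g u := by
      rw [intervalIntegral.integral_of_le ht0.le]
      apply setIntegral_nonneg measurableSet_Ioc
      intro u hu
      exact hgpos u hu.1 (hu.2.trans hts)
    have hsplit : (∫ u in (0:ℝ)..t, g u) + ∫ u in t..s, g u = ∫ u in (0:ℝ)..s, g u :=
      intervalIntegral.integral_add_adjacent_intervals hg0t hgts
    have hval : ∫ u in (0:ℝ)..s, g u = s ^ (1 - 2*H) * C2 H := aux_val hH1 hH2 hs0
    have hg_le : ∫ u in t..s, g u ≤ s ^ (1 - 2*H) * C2 H := by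
      rw [← hval, ← hsplit]; linarith
    have hI_le : (∫ u in t..s, f u) ≤ C₁ * t ^ ((1:ℝ)/2 - H) * (s ^ (1 - 2*H) * C2 H) := by
      have step : (∫ u in t..s, f u) ≤ C₁ * t ^ ((1:ℝ)/2 - H) * ∫ u in t..s, g u := by
        by_cases hInt : IntervalIntegrable f volume t s
        · rw [← intervalIntegral.integral_const_mul]
          exact intervalIntegral.integral_mono_on hts hInt
            (hgts.const_mul _) hfg
        · rw [intervalIntegral.integral_undef hInt]
          apply mul_nonneg (by positivity)
          exact intervalIntegral.integral_nonneg hts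
            (fun u hu => hgpos u (lt_of_lt_of_le ht0 hu.1) hu.2)
      exact step.trans (mul_le_mul_of_nonneg_left hg_le (by positivity))
    -- square it
    have hsp : (0:ℝ) ≤ s ^ (H - 1/2) := Real.rpow_nonneg hs0.le _
    have et : t ^ ((1:ℝ)/2 - H) * t ^ ((1:ℝ)/2 - H) = t ^ (1 - 2*H) := by
      rw [← Real.rpow_add ht0]; congr 1; ring
    have es : s ^ (H - 1/2) * s ^ (1 - 2*H) * (s ^ (H - 1/2) * s ^ (1 - 2*H)) = s ^ (1 - 2*H) := by
      rw [← Real.rpow_add hs0, ← Real.rpow_add hs0]; congr 1; ring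
    calc (s ^ (H - 1/2) * ∫ u in t..s, f u)^2
        ≤ (s ^ (H - 1/2) * (C₁ * t ^ ((1:ℝ)/2 - H) * (s ^ (1 - 2*H) * C2 H)))^2 := by
          apply pow_le_pow_left₀ (mul_nonneg hsp hI0)
          exact mul_le_mul_of_nonneg_left hI_le hsp
      _ = C₁^2 * (C2 H)^2 * (t ^ ((1:ℝ)/2 - H) * t ^ ((1:ℝ)/2 - H))
            * (s ^ (H - 1/2) * s ^ (1 - 2*H) * (s ^ (H - 1/2) * s ^ (1 - 2*H))) := by ring
      _ = D * s ^ (1 - 2*H) := by rw [et, es, hD]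
  -- outer integral
  by_cases hF : IntervalIntegrable
      (fun s => (s ^ (H - 1/2) *
        ∫ u in t..s,
          (u ^ ((1:ℝ)/2 - H) - s ^ ((1:ℝ)/2 - H)) * Ker H u t * (s - u) ^ (-(1/2 + H)))^2)
      volume t 1
  · have hrp : IntervalIntegrable (fun s : ℝ => D * s ^ (1 - 2*H)) volume t 1 :=
      (intervalIntegral.intervalIntegrable_rpow' (by linarith)).const_mul _
    calc (∫ s in t..(1:ℝ),
          (s ^ (H - 1/2) *
            ∫ u in t..s,
              (u ^ ((1:ℝ)/2 - H) - s ^ ((1:ℝ)/2 - H)) * Ker H u t * (s - u) ^ (-(1/2 + H)))^2)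
        ≤ ∫ s in t..(1:ℝ), D * s ^ (1 - 2*H) :=
          intervalIntegral.integral_mono_on ht1 hF hrp key
      _ = D * ∫ s in t..(1:ℝ), s ^ (1 - 2*H) := intervalIntegral.integral_const_mul _ _
      _ = D * ((1 - t ^ (1 - 2*H + 1)) / (1 - 2*H + 1)) := by
          rw [integral_rpow (Or.inl (by linarith)), Real.one_rpow]
      _ ≤ D * (1 / (1 - 2*H + 1)) := by
          apply mul_le_mul_of_nonneg_left _ hD0
          apply (div_le_div_iff_of_pos_right (by linarith : (0:ℝ) < 1 - 2*H + 1)).2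
          have := Real.rpow_nonneg ht0.le (1 - 2*H + 1)
          linarith
      _ = D / (2 - 2*H) := by rw [show (1:ℝ) - 2*H + 1 = 2 - 2*H by ring]; ring
  · rw [intervalIntegral.integral_undef hF]
    exact div_nonneg hD0 h2H.le
end
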